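/- arXiv:2504.01918 — 11 statements merged into one kernel-verified Lean document; each statement's English description precedes it below -/
import Mathlib

section
/- Let D be a strong digraph admitting an ear decomposition in which every ear has length at least 2 (i.e., D is in the family LE_2; in particular this covers LE_i for every i ≥ 2). Then D has a Seymour vertex, that is, a vertex v with |N^{++}(v)| ≥ |N^+(v)|. Consequently, Seymour's Second Neighborhood Conjecture holds for every digraph in LE_i with i ≥ 2. -/
/-- A digraph on a vertex type `V`: a set of vertices together with an arc
relation whose endpoints lie in the vertex set.  (No loops are allowed in this
paper; this is the hypothesis `Digr.Loopless` below.  Multiple arcs cannot be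
represented.) -/
structure Digr (V : Type) where
  verts : Set V
  Adj : V → V → Prop
  adj_dom : ∀ ⦃u v : V⦄, Adj u v → u ∈ verts ∧ v ∈ verts

namespace Digr

variable {V : Type}

/-- A digraph has no loops. -/
def Loopless (D : Digr V) : Prop := ∀ v, ¬ D.Adj v v

/-- An asymmetrical digraph (an oriented graph): it never contains both arcs
`(u,v)` and `(v,u)`. -/
def Asymmetrical (D : Digr V) : Prop := ∀ u v, D.Adj u v → ¬ D.Adj v u

/-- `H` is a subdigraph of `D`. -/
def IsSubdigraph (H D : Digr V) : Prop :=
  H.verts ⊆ D.verts ∧ ∀ ⦃u v⦄, H.Adj u v → D.Adj u v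

/-- Union of two digraphs. -/
def union (D₁ D₂ : Digr V) : Digr V where
  verts := D₁.verts ∪ D₂.verts
  Adj u v := D₁.Adj u v ∨ D₂.Adj u v
  adj_dom := by
    rintro u v (h | h)
    · exact ⟨Or.inl (D₁.adj_dom h).1, Or.inl (D₁.adj_dom h).2⟩
    · exact ⟨Or.inr (D₂.adj_dom h).1, Or.inr (D₂.adj_dom h).2⟩

/-- A digraph is strong if every vertex can reach every vertex by a directed
walk (equivalently, by a directed path). -/
def IsStrong (D : Digr V) : Prop :=
  ∀ x ∈ D.verts, ∀ y ∈ D.verts, Relation.ReflTransGen D.Adj x y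

/-- `D` is precisely a directed cycle with `n` vertices (`n ≥ 2`). -/
def IsCycleOfLength (D : Digr V) (n : ℕ) : Prop :=
  2 ≤ n ∧ ∃ f : ZMod n → V, Function.Injective f ∧
    D.verts = Set.range f ∧ ∀ u v, (D.Adj u v ↔ ∃ i, u = f i ∧ v = f (i + 1))

/-- `D` is precisely a directed cycle. -/
def IsCycleDigr (D : Digr V) : Prop := ∃ n, D.IsCycleOfLength n

/-- The underlying (undirected) simple graph on the vertex set of `D`. -/
def UG (D : Digr V) : SimpleGraph D.verts where
  Adj u v := u ≠ v ∧ (D.Adj u v ∨ D.Adj v u)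
  symm := ⟨by rintro u v ⟨hne, h⟩; exact ⟨hne.symm, h.symm⟩⟩
  loopless := ⟨by rintro u ⟨hne, _⟩; exact hne rfl⟩

/-- `D` is nonseparable: its underlying graph is connected and deleting any
single vertex leaves it connected (no cut vertex). -/
def IsNonseparable (D : Digr V) : Prop :=
  D.UG.Connected ∧ ∀ v : D.verts, (D.UG.induce {u | u ≠ v}).Connected

/-- The out-neighbourhood `N⁺(v)`. -/
def outNbhd (D : Digr V) (v : V) : Set V := {u | D.Adj v u}

/-- The second out-neighbourhood `N⁺⁺(v) = (⋃ u ∈ N⁺(v), N⁺(u)) \ N⁺(v)`. -/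
def secondOutNbhd (D : Digr V) (v : V) : Set V :=
  {w | ∃ u, D.Adj v u ∧ D.Adj u w} \ D.outNbhd v

end Digr

/-- An independent set of vertices: no arc between two distinct members. -/
def IsIndependent {V : Type} (D : Digr V) (S : Set V) : Prop :=
  ∀ u ∈ S, ∀ v ∈ S, u ≠ v → ¬ D.Adj u v

/-- An absorbent set: every vertex outside it has an out-neighbour inside it. -/
def IsAbsorbent {V : Type} (D : Digr V) (S : Set V) : Prop :=
  ∀ u ∈ D.verts, u ∉ S → ∃ v ∈ S, D.Adj u v

/-- A kernel: an independent absorbent set of vertices. -/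
def IsKernel {V : Type} (D : Digr V) (N : Set V) : Prop :=
  N ⊆ D.verts ∧ IsIndependent D N ∧ IsAbsorbent D N

/-- `D` has a kernel. -/
def HasKernel {V : Type} (D : Digr V) : Prop := ∃ N, IsKernel D N

/-- A quasi-kernel: an independent set such that every outside vertex reaches
it by a directed path of length at most 2. -/
def IsQuasiKernel {V : Type} (D : Digr V) (Q : Set V) : Prop :=
  Q ⊆ D.verts ∧ IsIndependent D Q ∧
    ∀ u ∈ D.verts, u ∉ Q → ∃ v ∈ Q, (D.Adj u v ∨ ∃ w, D.Adj u w ∧ D.Adj w v)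

/-- A finite sequence `x 0, x 1, ..., x len` of vertices. -/
structure VSeq (V : Type) where
  len : ℕ
  x : ℕ → V

namespace VSeq

variable {V : Type}

/-- The digraph consisting of the vertices and consecutive arcs of the
sequence. -/
def toDigr (s : VSeq V) : Digr V where
  verts := s.x '' {i | i ≤ s.len}
  Adj u v := ∃ i < s.len, u = s.x i ∧ v = s.x (i + 1)
  adj_dom := by
    rintro u v ⟨i, hi, rfl, rfl⟩
    exact ⟨⟨i, le_of_lt hi, rfl⟩, ⟨i + 1, hi, rfl⟩⟩

end VSeq

/-- `e` is an ear of `H` in `D`: a directed path (or a directed cycle, when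
the two end vertices coincide) of `D` whose end vertices lie in `H` and whose
internal vertices are pairwise distinct and do not lie in `H`. -/
def IsEarOf {V : Type} (D H : Digr V) (e : VSeq V) : Prop :=
  1 ≤ e.len ∧
  (∀ i < e.len, D.Adj (e.x i) (e.x (i + 1))) ∧
  e.x 0 ∈ H.verts ∧ e.x e.len ∈ H.verts ∧
  (∀ i, 0 < i → i < e.len → e.x i ∉ H.verts) ∧
  (∀ i ≤ e.len, ∀ j ≤ e.len, e.x i = e.x j →
    i = j ∨ (i = 0 ∧ j = e.len) ∨ (i = e.len ∧ j = 0))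

/-- A directed path in `D`, given by its sequence of (distinct) vertices. -/
def Digr.IsPathIn {V : Type} (D : Digr V) (p : VSeq V) : Prop :=
  (∀ i ≤ p.len, p.x i ∈ D.verts) ∧
  (∀ i < p.len, D.Adj (p.x i) (p.x (i + 1))) ∧
  ∀ i ≤ p.len, ∀ j ≤ p.len, p.x i = p.x j → i = j

/-- An ear decomposition `(D_0, D_1, ..., D_k)` of the strong digraph `D`:
`D_0` is a directed cycle, `D_{i+1} = D_i ∪ P_i` for an ear `P_i` of `D_i`
in `D`, each `D_i` is a strong subdigraph of `D`, and `D_k = D`. -/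
structure EarDecomp {V : Type} (D : Digr V) where
  k : ℕ
  Ds : ℕ → Digr V
  ears : ℕ → VSeq V
  base : (Ds 0).IsCycleDigr
  strong : ∀ i ≤ k, (Ds i).IsStrong
  sub : ∀ i ≤ k, (Ds i).IsSubdigraph D
  isEar : ∀ i < k, IsEarOf D (Ds i) (ears i)
  step : ∀ i < k, Ds (i + 1) = (Ds i).union (ears i).toDigr
  top : Ds k = D

/-- `D` belongs to the family `LE_L`: it has an ear decomposition all of whose
ears have length at least `L`. -/
def InLE {V : Type} (D : Digr V) (L : ℕ) : Prop :=
  ∃ E : EarDecomp D, ∀ i < E.k, L ≤ (E.ears i).len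

/-- `T` is a tournament on `Fin n`: exactly one arc between any two distinct
vertices, and no loops. -/
def IsTournament {n : ℕ} (T : Fin n → Fin n → Prop) : Prop :=
  (∀ v, ¬ T v v) ∧ ∀ u v : Fin n, u ≠ v → (T u v ↔ ¬ T v u)

/-- There is a directed walk of length `k` from `u` to `v` in `T`. -/
def HasWalkOfLength {n : ℕ} (T : Fin n → Fin n → Prop) (k : ℕ) (u v : Fin n) :
    Prop :=
  ∃ w : ℕ → Fin n, w 0 = u ∧ w k = v ∧ ∀ m < k, T (w m) (w (m + 1))

/-- The oriented chromatic number of `D` is at most `m`: there is a tournament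
on `m` vertices and a digraph homomorphism of `D` into it. -/
def OrientedChromAtMost {V : Type} (D : Digr V) (m : ℕ) : Prop :=
  ∃ T : Fin m → Fin m → Prop, IsTournament T ∧
    ∃ φ : V → Fin m, ∀ u v, D.Adj u v → T (φ u) (φ v)


/-- Auxiliary: if some vertex has out-neighbourhood exactly `{w}` and there
are two distinct vertices, then a Seymour vertex exists. -/
lemma Digr.seymour_of_outdeg_one {V : Type} (D : Digr V)
    (hfin : D.verts.Finite) (hloop : D.Loopless) (hstrong : D.IsStrong)
    (v w : V) (hN : D.outNbhd v = {w})
    (a b : V) (ha : a ∈ D.verts) (hb : b ∈ D.verts) (hab : a ≠ b) :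
    ∃ v ∈ D.verts, (D.outNbhd v).ncard ≤ (D.secondOutNbhd v).ncard := by
  have hvw : D.Adj v w := by
    have : w ∈ D.outNbhd v := by rw [hN]; rfl
    exact this
  have hv : v ∈ D.verts := (D.adj_dom hvw).1
  have hw : w ∈ D.verts := (D.adj_dom hvw).2
  obtain ⟨t, ht, htw⟩ : ∃ t ∈ D.verts, t ≠ w := by
    rcases eq_or_ne a w with rfl | h
    · exact ⟨b, hb, fun h' => hab h'.symm⟩
    · exact ⟨a, ha, h⟩
  have hwt := hstrong w hw t ht
  rcases hwt.cases_head with rfl | ⟨z, hwz, _⟩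
  · exact absurd rfl htw
  have hzw : z ≠ w := fun h => hloop w (h ▸ hwz)
  have hzmem : z ∈ D.secondOutNbhd v := by
    refine ⟨⟨w, hvw, hwz⟩, ?_⟩
    rw [hN]; simpa using hzw
  refine ⟨v, hv, ?_⟩
  have h1 : (D.outNbhd v).ncard = 1 := by rw [hN]; exact Set.ncard_singleton w
  have hsub : D.secondOutNbhd v ⊆ D.verts := by
    rintro x ⟨⟨u, _, hux⟩, _⟩
    exact (D.adj_dom hux).2
  have hfin2 : (D.secondOutNbhd v).Finite := hfin.subset hsub
  rw [h1]
  exact (Set.ncard_pos hfin2).mpr ⟨z, hzmem⟩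

/-- Every strong (finite, loopless) digraph in `LE_2` (hence in
`LE_i` for every `i ≥ 2`) has a Seymour vertex: a vertex `v` with
`|N⁺⁺(v)| ≥ |N⁺(v)|`.  Thus Seymour's Second Neighborhood Conjecture holds on
`LE_i` for every `i ≥ 2`. -/
theorem seymour_second_neighborhood_LE2 {V : Type} (D : Digr V)
    (hfin : D.verts.Finite) (hloop : D.Loopless)
    (hstrong : D.IsStrong) (hLE : InLE D 2) :
    ∃ v ∈ D.verts, (D.outNbhd v).ncard ≤ (D.secondOutNbhd v).ncard := by
  obtain ⟨E, hE⟩ := hLE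
  obtain ⟨n, hn, f, hinj, hverts, hadj⟩ := E.base
  have hsub0 := E.sub 0 (Nat.zero_le _)
  haveI : NeZero n := ⟨by omega⟩
  have hcard : 1 < Fintype.card (ZMod n) := by
    rw [ZMod.card]; omega
  obtain ⟨i, j, hij⟩ := Fintype.exists_pair_of_one_lt_card hcard
  have hfi : f i ∈ D.verts := hsub0.1 (by rw [hverts]; exact ⟨i, rfl⟩)
  have hfj : f j ∈ D.verts := hsub0.1 (by rw [hverts]; exact ⟨j, rfl⟩)
  have hfij : f i ≠ f j := fun h => hij (hinj h)
  rcases Nat.eq_zero_or_pos E.k with hk | hk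
  · -- D itself is the base cycle
    have hD : E.Ds 0 = D := hk ▸ E.top
    have hN : D.outNbhd (f 0) = {f 1} := by
      ext u
      simp only [Digr.outNbhd, Set.mem_setOf_eq, Set.mem_singleton_iff]
      rw [← hD, hadj]
      constructor
      · rintro ⟨m, h0, rfl⟩
        have : (0 : ZMod n) = m := hinj h0
        rw [← this, zero_add]
      · rintro rfl
        exact ⟨0, rfl, by rw [zero_add]⟩
    exact D.seymour_of_outdeg_one hfin hloop hstrong (f 0) (f 1) hN
      (f i) (f j) hfi hfj hfij
  · -- take an internal vertex of the last ear
    obtain ⟨m, hkm⟩ : ∃ m, E.k = m + 1 := ⟨E.k - 1, by omega⟩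
    have hmk : m < E.k := by omega
    obtain ⟨hlen1, harcs, h0, hend, hint, hdist⟩ := E.isEar m hmk
    have hlen2 : 2 ≤ (E.ears m).len := hE m hmk
    have htop : E.Ds (m + 1) = D := by rw [← hkm]; exact E.top
    have hunion : D = (E.Ds m).union (E.ears m).toDigr :=
      htop.symm.trans (E.step m hmk)
    set e := E.ears m with he
    have hN : D.outNbhd (e.x 1) = {e.x 2} := by
      ext u
      simp only [Digr.outNbhd, Set.mem_setOf_eq, Set.mem_singleton_iff]
      constructor
      · intro hadj'
        have h' : ((E.Ds m).union e.toDigr).Adj (e.x 1) u := by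
          rw [← hunion]; exact hadj'
        rcases h' with h' | h'
        · exact absurd ((E.Ds m).adj_dom h').1
            (hint 1 one_pos (by omega))
        · obtain ⟨p, hp, h1, rfl⟩ := h'
          rcases hdist 1 (by omega) p (le_of_lt hp) h1 with rfl | ⟨h, _⟩ | ⟨h, _⟩
          · rfl
          · omega
          · omega
      · rintro rfl
        exact harcs 1 (by omega)
    exact D.seymour_of_outdeg_one hfin hloop hstrong (e.x 1) (e.x 2) hN
      (f i) (f j) hfi hfj hfij
end

section
/- Let D be a strong digraph admitting an ear decomposition in which every ear has length at least 3 (i.e., D ∈ LE_3). Then D has a small quasi-kernel, that is, a quasi-kernel Q with |Q| ≤ |V(D)|/2. Consequently, the small quasi-kernel conjecture of Erdős and Székely holds for every digraph in LE_i with i ≥ 3. -/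
lemma cycle_lemma {V : Type} (D : Digr V) (h : D.IsCycleDigr) :
    ∃ Q, IsQuasiKernel D Q ∧ 2 * Q.ncard ≤ D.verts.ncard := by
  obtain ⟨n, hn2, f, hfinj, hverts, hadj⟩ := h
  haveI : NeZero n := ⟨by omega⟩
  haveI : Fact (1 < n) := ⟨hn2⟩
  set S : Set (ZMod n) := {i | i.val % 2 = 0 ∧ i.val ≠ n - 1} with hS
  have hvlt : ∀ i : ZMod n, i.val < n := fun i => ZMod.val_lt i
  have hval1 : ∀ i : ZMod n,
      ((i + 1).val = i.val + 1 ∧ i.val + 1 < n) ∨ (i.val = n - 1 ∧ (i + 1).val = 0) := by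
    intro i
    have h3 := hvlt i
    have h0 : (i + 1).val = (i.val + 1) % n := by rw [ZMod.val_add, ZMod.val_one]
    rcases lt_or_ge (i.val + 1) n with h | h
    · exact Or.inl ⟨by rw [h0, Nat.mod_eq_of_lt h], h⟩
    · have hn : i.val + 1 = n := by omega
      exact Or.inr ⟨by omega, by rw [h0, hn, Nat.mod_self]⟩
  have hclaim : ∀ i : ZMod n, i ∉ S → (i + 1 ∈ S ∨ i + 1 + 1 ∈ S) := by
    intro i hi
    simp only [hS, Set.mem_setOf_eq, not_and_or, not_ne_iff] at hi ⊢
    have h1 := hval1 i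
    have h2 := hval1 (i + 1)
    omega
  refine ⟨f '' S, ⟨?_, ?_, ?_⟩, ?_⟩
  · rw [hverts]; exact Set.image_subset_range f S
  · rintro u ⟨i, hi, rfl⟩ v ⟨i', hi', rfl⟩ hne hadjuv
    rw [hadj] at hadjuv
    obtain ⟨g, hg1, hg2⟩ := hadjuv
    have hig : i = g := hfinj hg1
    have hig' : i' = i + 1 := by rw [hig]; exact hfinj hg2
    have h1 := hval1 i
    simp only [hS, Set.mem_setOf_eq] at hi hi'
    rw [hig'] at hi'
    omega
  · rintro u hu huQ
    rw [hverts] at hu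
    obtain ⟨i, rfl⟩ := hu
    have hiS : i ∉ S := fun h => huQ ⟨i, h, rfl⟩
    rcases hclaim i hiS with h1 | h2
    · exact ⟨f (i + 1), ⟨i + 1, h1, rfl⟩, Or.inl ((hadj _ _).2 ⟨i, rfl, rfl⟩)⟩
    · exact ⟨f (i + 1 + 1), ⟨i + 1 + 1, h2, rfl⟩,
        Or.inr ⟨f (i + 1), (hadj _ _).2 ⟨i, rfl, rfl⟩, (hadj _ _).2 ⟨i + 1, rfl, rfl⟩⟩⟩
  · have hQcard : (f '' S).ncard = S.ncard := Set.ncard_image_of_injective S hfinj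
    have hVcard : D.verts.ncard = n := by
      rw [hverts, ← Set.image_univ, Set.ncard_image_of_injective _ hfinj,
        Set.ncard_univ, Nat.card_eq_fintype_card, ZMod.card]
    have hdisj : Disjoint S ((· + 1) '' S) := by
      rw [Set.disjoint_right]
      rintro a ⟨i, hi, rfl⟩ ha
      simp only [hS, Set.mem_setOf_eq] at hi ha
      have h1 := hval1 i
      omega
    have hinj1 : Function.Injective (fun i : ZMod n => i + 1) := add_left_injective 1
    have h2S : 2 * S.ncard = (S ∪ (· + 1) '' S).ncard := by
      rw [Set.ncard_union_eq hdisj (Set.toFinite _) (Set.toFinite _),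
        Set.ncard_image_of_injective _ hinj1]
      ring
    have hle : (S ∪ (· + 1) '' S).ncard ≤ n := by
      have := Set.ncard_le_ncard (Set.subset_univ (S ∪ (· + 1) '' S)) (Set.toFinite _)
      rwa [Set.ncard_univ, Nat.card_eq_fintype_card, ZMod.card] at this
    omega
lemma step_lemma {V : Type} (H : Digr V) (e : VSeq V)
    (hfin : H.verts.Finite)
    (hlen : 3 ≤ e.len)
    (h0 : e.x 0 ∈ H.verts) (hl : e.x e.len ∈ H.verts)
    (hint : ∀ i, 0 < i → i < e.len → e.x i ∉ H.verts)
    (hinj : ∀ i ≤ e.len, ∀ j ≤ e.len, e.x i = e.x j →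
      i = j ∨ (i = 0 ∧ j = e.len) ∨ (i = e.len ∧ j = 0))
    (Q : Set V) (hQ : IsQuasiKernel H Q)
    (hcard : 2 * Q.ncard ≤ H.verts.ncard) :
    ∃ Q', IsQuasiKernel (H.union e.toDigr) Q' ∧
      2 * Q'.ncard ≤ (H.union e.toDigr).verts.ncard := by
  classical
  obtain ⟨hQsub, hQind, hQcov⟩ := hQ
  set ℓ := e.len with hℓdef
  -- the top picked index
  set t : ℕ := if e.x ℓ ∈ Q then ℓ - 2 else ℓ - 1 with ht
  have ht1 : t ≤ ℓ - 1 := by rw [ht]; split <;> omega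
  have ht2 : e.x ℓ ∈ Q → t = ℓ - 2 := fun h => by rw [ht, if_pos h]
  have ht3 : e.x ℓ ∉ Q → t = ℓ - 1 := fun h => by rw [ht, if_neg h]
  set P : Set ℕ := {j | 2 ≤ j ∧ j ≤ t ∧ j % 2 = t % 2} with hP
  -- internal vertices are not in Q
  have hxQ : ∀ j, 1 ≤ j → j ≤ ℓ - 1 → e.x j ∉ Q :=
    fun j h1 h2 hmem => hint j (by omega) (by omega) (hQsub hmem)
  -- identifying indices of internal vertices
  have hidx : ∀ i ≤ ℓ, ∀ j, 1 ≤ j → j ≤ ℓ - 1 → e.x i = e.x j → i = j := by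
    intro i hi j h1 h2 heq
    rcases hinj i hi j (by omega) heq with h | ⟨_, h⟩ | ⟨_, h⟩ <;> omega
  set Q' : Set V := Q ∪ e.x '' P with hQ'def
  have hPsub : ∀ j ∈ P, 2 ≤ j ∧ j ≤ ℓ - 1 := by
    intro j hj; rw [hP] at hj; exact ⟨hj.1, le_trans hj.2.1 ht1⟩
  have hPQ' : ∀ j ∈ P, e.x j ∈ Q' := fun j hj => Or.inr ⟨j, hj, rfl⟩
  -- membership of Q' members
  have hQ'mem : ∀ u ∈ Q', u ∈ Q ∨ ∃ j ∈ P, u = e.x j := by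
    rintro u (h | ⟨j, hj, rfl⟩)
    · exact Or.inl h
    · exact Or.inr ⟨j, hj, rfl⟩
  refine ⟨Q', ⟨?_, ?_, ?_⟩, ?_⟩
  · -- subset of vertices
    rintro u (h | ⟨j, hj, rfl⟩)
    · exact Or.inl (hQsub h)
    · refine Or.inr ⟨j, ?_, rfl⟩
      have := hPsub j hj
      show j ≤ e.len
      omega
  · -- independence
    rintro u hu v hv hne hadj
    have hu' := hQ'mem u hu
    have hv' := hQ'mem v hv
    rcases hadj with hH | ⟨i, hiℓ, hui, hvi⟩
    · -- an arc of H : both endpoints in H.verts, hence both in Q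
      have hudom := (H.adj_dom hH).1
      have hvdom := (H.adj_dom hH).2
      have huQ : u ∈ Q := by
        rcases hu' with h | ⟨j, hj, rfl⟩
        · exact h
        · exact absurd hudom (hint j (by have := hPsub j hj; omega) (by have := hPsub j hj; omega))
      have hvQ : v ∈ Q := by
        rcases hv' with h | ⟨j, hj, rfl⟩
        · exact h
        · exact absurd hvdom (hint j (by have := hPsub j hj; omega) (by have := hPsub j hj; omega))
      exact hQind u huQ v hvQ hne hH
    · -- an ear arc  u = x i, v = x (i+1), i < ℓ
      subst hui hvi
      rcases hu' with huQ | ⟨j, hj, hju⟩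
      · -- u ∈ Q ⊆ H.verts, so i = 0 and v = x 1 which is internal : contradiction
        have hi0 : i = 0 := by
          by_contra hne0
          exact hint i (by omega) hiℓ (hQsub huQ)
        subst hi0
        -- v = x 1, internal
        rcases hv' with hvQ | ⟨j, hj, hjv⟩
        · exact hxQ 1 le_rfl (by omega) (by simpa using hvQ)
        · -- x 1 = x j with j ∈ P, so j = 1: contradiction with 2 ≤ j
          have := hidx j (by have := hPsub j hj; omega) 1 le_rfl (by omega) hjv.symm
          have := hPsub j hj
          omega
      · -- u = x j, j ∈ P
        have hij : i = j := hidx i (le_of_lt hiℓ) j (by have := hPsub j hj; omega)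
          (by have := hPsub j hj; omega) hju
        subst hij
        rcases hv' with hvQ | ⟨j', hj', hj'v⟩
        · -- x (i+1) ∈ Q ⊆ H.verts : i+1 = ℓ, i = ℓ - 1 ≤ t, so x ℓ ∉ Q, but v = x ℓ ∈ Q
          have hiv : i + 1 = ℓ := by
            by_contra hne'
            exact hint (i + 1) (by omega) (by omega) (hQsub hvQ)
          have hxℓQ : e.x ℓ ∉ Q := by
            intro hmem
            have := ht2 hmem
            have hj' : 2 ≤ i ∧ i ≤ t ∧ i % 2 = t % 2 := hj
            omega
          rw [hiv] at hvQ
          exact hxℓQ hvQ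
        · -- x (i+1) = x j' with j' ∈ P : j' = i + 1, parity contradiction
          have hj'1 := hPsub j' hj'
          have : i + 1 = j' := hidx (i + 1) (by omega) j' (by omega) (by omega) hj'v
          have hja : 2 ≤ i ∧ i ≤ t ∧ i % 2 = t % 2 := hj
          have hjb : 2 ≤ j' ∧ j' ≤ t ∧ j' % 2 = t % 2 := hj'
          omega
  · -- quasi-absorbency
    have hcovH : ∀ u ∈ H.verts, u ∉ Q' →
        ∃ v ∈ Q', ((H.union e.toDigr).Adj u v ∨
          ∃ w, (H.union e.toDigr).Adj u w ∧ (H.union e.toDigr).Adj w v) := by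
      intro u hu huQ'
      have huQ : u ∉ Q := fun h => huQ' (Or.inl h)
      obtain ⟨v, hvQ, hv⟩ := hQcov u hu huQ
      refine ⟨v, Or.inl hvQ, ?_⟩
      rcases hv with h | ⟨w, h1, h2⟩
      · exact Or.inl (Or.inl h)
      · exact Or.inr ⟨w, Or.inl h1, Or.inl h2⟩
    rintro u (hu | ⟨i, hiℓ, rfl⟩) huQ'
    · exact hcovH u hu huQ'
    · -- u = x i, i ≤ ℓ
      simp only [Set.mem_setOf_eq] at hiℓ
      by_cases hi0 : i = 0
      · exact hcovH _ (hi0 ▸ h0) huQ'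
      by_cases hiℓ' : i = ℓ
      · exact hcovH _ (hiℓ' ▸ hl) huQ'
      -- internal : 1 ≤ i ≤ ℓ - 1, and i ∉ P
      have hi1 : 1 ≤ i := by omega
      have hi2 : i ≤ ℓ - 1 := by omega
      have hiP : i ∉ P := fun h => huQ' (Or.inr ⟨i, h, rfl⟩)
      by_cases hit : i ≤ t
      · by_cases hpar : i % 2 = t % 2
        · -- i = 1, use path x 1 → x 2 → x 3
          have hi1' : i = 1 := by
            by_contra hne1
            exact hiP ⟨by omega, by omega, by omega⟩
          subst hi1'
          have hx3 : e.x 3 ∈ Q' := by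
            by_cases h3t : 3 ≤ t
            · exact hPQ' 3 ⟨by omega, h3t, by omega⟩
            · -- t = 1, hence x ℓ ∈ Q and ℓ = 3
              have htℓ : e.x ℓ ∈ Q := by
                by_contra hc
                have := ht3 hc
                omega
              have : ℓ = 3 := by have := ht2 htℓ; omega
              rw [← this]
              exact Or.inl htℓ
          exact ⟨e.x 3, hx3, Or.inr ⟨e.x 2,
            Or.inr ⟨1, by omega, rfl, rfl⟩, Or.inr ⟨2, by omega, rfl, rfl⟩⟩⟩
        · -- i + 1 ∈ P
          have hiP1 : i + 1 ∈ P := ⟨by omega, by omega, by omega⟩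
          exact ⟨e.x (i + 1), hPQ' _ hiP1, Or.inl (Or.inr ⟨i, by omega, rfl, rfl⟩)⟩
      · -- i > t : then x ℓ ∈ Q, t = ℓ - 2, i = ℓ - 1
        have htℓ : e.x ℓ ∈ Q := by
          by_contra hc
          have := ht3 hc
          omega
        have hieq : i = ℓ - 1 := by have := ht2 htℓ; omega
        have harc : (H.union e.toDigr).Adj (e.x i) (e.x ℓ) := by
          refine Or.inr ⟨i, by omega, rfl, ?_⟩
          congr 1
          omega
        exact ⟨e.x ℓ, Or.inl htℓ, Or.inl harc⟩
  · -- cardinality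
    have hxinj : Set.InjOn e.x {j | 1 ≤ j ∧ j ≤ ℓ - 1} := by
      intro a ha b hb hab
      simp only [Set.mem_setOf_eq] at ha hb
      rcases hinj a (by omega) b (by omega) hab with h | ⟨h1, h2⟩ | ⟨h1, h2⟩ <;> omega
    set N : Set V := e.x '' {j | 1 ≤ j ∧ j ≤ ℓ - 1} with hN
    have hverts : (H.union e.toDigr).verts = H.verts ∪ N := by
      ext u
      constructor
      · rintro (h | ⟨i, hi, rfl⟩)
        · exact Or.inl h
        · simp only [Set.mem_setOf_eq] at hi
          by_cases hi0 : i = 0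
          · exact Or.inl (hi0 ▸ h0)
          by_cases hiℓ' : i = ℓ
          · exact Or.inl (hiℓ' ▸ hl)
          · exact Or.inr ⟨i, ⟨by omega, by omega⟩, rfl⟩
      · rintro (h | ⟨i, hi, rfl⟩)
        · exact Or.inl h
        · exact Or.inr ⟨i, by simp only [Set.mem_setOf_eq] at hi ⊢; omega, rfl⟩
    have hNdisj : Disjoint H.verts N := by
      rw [Set.disjoint_right]
      rintro a ⟨i, hi, rfl⟩ ha
      simp only [Set.mem_setOf_eq] at hi
      exact hint i (by omega) (by omega) ha
    have hIcc : {j | 1 ≤ j ∧ j ≤ ℓ - 1} = Set.Icc 1 (ℓ - 1) := by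
      ext a; simp [Set.mem_Icc]
    have hNfin : N.Finite := by
      rw [hN, hIcc]; exact (Set.finite_Icc 1 (ℓ - 1)).image e.x
    have hNcard : N.ncard = ℓ - 1 := by
      rw [hN, Set.ncard_image_of_injOn hxinj, hIcc]
      simp [Set.ncard_eq_toFinset_card']
    have hVcard : (H.union e.toDigr).verts.ncard = H.verts.ncard + (ℓ - 1) := by
      rw [hverts, Set.ncard_union_eq hNdisj hfin hNfin, hNcard]
    have hPIcc : P = (fun m => 2 * m + t % 2) '' Set.Icc 1 (t / 2) := by
      ext j
      simp only [hP, Set.mem_setOf_eq, Set.mem_image, Set.mem_Icc]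
      constructor
      · intro hj
        exact ⟨j / 2, ⟨by omega, by omega⟩, by omega⟩
      · rintro ⟨m, hm, rfl⟩
        omega
    have hPfin : P.Finite := by
      rw [hPIcc]; exact (Set.finite_Icc 1 (t / 2)).image _
    have hPcard : 2 * P.ncard ≤ ℓ - 1 := by
      have hinj2 : Function.Injective (fun m : ℕ => 2 * m + t % 2) := by
        intro a b hab
        simp only at hab
        omega
      rw [hPIcc, Set.ncard_image_of_injective _ hinj2]
      have : (Set.Icc 1 (t / 2)).ncard = t / 2 + 1 - 1 := by
        simp [Set.ncard_eq_toFinset_card']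
      rw [this]
      omega
    have hxPcard : (e.x '' P).ncard = P.ncard := by
      refine Set.ncard_image_of_injOn (hxinj.mono ?_)
      intro j hj
      have := hPsub j hj
      simp only [Set.mem_setOf_eq]
      omega
    have hQdisj : Disjoint Q (e.x '' P) := by
      rw [Set.disjoint_right]
      rintro a ⟨j, hj, rfl⟩ ha
      have := hPsub j hj
      exact hxQ j (by omega) (by omega) ha
    have hQfin : Q.Finite := hfin.subset hQsub
    have hQ'card : Q'.ncard = Q.ncard + P.ncard := by
      rw [hQ'def, Set.ncard_union_eq hQdisj hQfin (hPfin.image e.x), hxPcard]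
    rw [hQ'card, hVcard]
    omega

/-- Every strong (finite, loopless) digraph in `LE_3` has a
small quasi-kernel, i.e. a quasi-kernel `Q` with `|Q| ≤ |V(D)|/2`. -/
theorem small_quasi_kernel_LE3 {V : Type} (D : Digr V)
    (hfin : D.verts.Finite) (hloop : D.Loopless)
    (hstrong : D.IsStrong) (hLE : InLE D 3) :
    ∃ Q : Set V, IsQuasiKernel D Q ∧ 2 * Q.ncard ≤ D.verts.ncard := by
  obtain ⟨E, h3⟩ := hLE
  have key : ∀ i, i ≤ E.k →
      ∃ Q, IsQuasiKernel (E.Ds i) Q ∧ 2 * Q.ncard ≤ (E.Ds i).verts.ncard := by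
    intro i
    induction i with
    | zero => intro _; exact cycle_lemma _ E.base
    | succ i ih =>
      intro hik
      obtain ⟨Q, hQ, hc⟩ := ih (by omega)
      obtain ⟨_, _, h0, hl, hint, hinj⟩ := E.isEar i (by omega)
      have hfin' : (E.Ds i).verts.Finite := hfin.subset (E.sub i (by omega)).1
      rw [E.step i (by omega)]
      exact step_lemma _ _ hfin' (h3 i (by omega)) h0 hl hint hinj Q hQ hc
  obtain ⟨Q, hQ, hc⟩ := key E.k le_rfl
  rw [E.top] at hQ hc
  exact ⟨Q, hQ, hc⟩
end

section
/- Let D be a strong nonseparable digraph, let H be a strong nonseparable subdigraph of D, and let P = (x_0, x_1, ..., x_{r-1}, x_r) be an ear of H in D with length l(P) ≥ 2. Suppose H' = H ∪ P has a kernel N' and one of the following holds: (1) x_0, x_r ∈ N'; (2) x_0 ∈ N' and x_r ∉ N'; (3) x_0 ∉ N', x_r ∈ N' and l(P) is even; (4) x_0, x_r ∉ N' and l(P) is odd. Then H has a kernel (indeed N' ∩ V(H) is a kernel of H). -/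
/-- If `H' = H ∪ P` has a kernel `N'` and one of the four
listed conditions on the ends of the ear `P = (x_0, ..., x_r)` holds, then
`N' ∩ V(H)` is a kernel of `H` (in particular `H` has a kernel). -/
theorem kernel_of_union_restricts {V : Type} (D H : Digr V)
    (hfin : D.verts.Finite) (hloop : D.Loopless)
    (hDstrong : D.IsStrong) (hDns : D.IsNonseparable)
    (hsub : H.IsSubdigraph D) (hHstrong : H.IsStrong) (hHns : H.IsNonseparable)
    (e : VSeq V) (he : IsEarOf D H e) (hlen : 2 ≤ e.len)
    (N' : Set V) (hN' : IsKernel (H.union e.toDigr) N')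
    (hcase :
      (e.x 0 ∈ N' ∧ e.x e.len ∈ N') ∨
      (e.x 0 ∈ N' ∧ e.x e.len ∉ N') ∨
      (e.x 0 ∉ N' ∧ e.x e.len ∈ N' ∧ Even e.len) ∨
      (e.x 0 ∉ N' ∧ e.x e.len ∉ N' ∧ Odd e.len)) :
    IsKernel H (N' ∩ H.verts) := by
  obtain ⟨hr1, hadjP, hx0, hxr, hint, hinjP⟩ := he
  obtain ⟨hNsub, hNind, hNabs⟩ := hN'
  set r := e.len with hrdef
  have hne : ∀ i, 1 ≤ i → i < r → e.x i ≠ e.x (i + 1) := by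
    intro i h1 h2 heq
    rcases hinjP i (le_of_lt h2) (i + 1) h2 heq with h | ⟨h, h'⟩ | ⟨h, h'⟩ <;> omega
  have earAdj : ∀ i < r, (H.union e.toDigr).Adj (e.x i) (e.x (i + 1)) :=
    fun i hi => Or.inr ⟨i, hi, rfl, rfl⟩
  -- alternation of N' along the ear, on indices 1..r
  have alt : ∀ d, ∀ i, i + d = r → 1 ≤ i →
      (e.x i ∈ N' ↔ (e.x r ∈ N' ↔ Even d)) := by
    intro d
    induction d with
    | zero =>
      intro i h _
      have : i = r := by omega
      subst this
      simp
    | succ d ih =>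
      intro i h h1
      have hir : i < r := by omega
      have hstep : e.x i ∈ N' ↔ e.x (i + 1) ∉ N' := by
        constructor
        · intro hi hij
          exact hNind _ hi _ hij (hne i h1 hir) (earAdj i hir)
        · intro hnot
          by_contra h2
          have hmem : e.x i ∈ (H.union e.toDigr).verts :=
            Or.inr ⟨i, le_of_lt hir, rfl⟩
          obtain ⟨v, hv, hadj'⟩ := hNabs _ hmem h2
          rcases hadj' with hH | ⟨j, hj, heq1, heq2⟩
          · exact hint i h1 hir (H.adj_dom hH).1
          · rcases hinjP i (le_of_lt hir) j (le_of_lt hj) heq1 with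
              hij | ⟨hij, _⟩ | ⟨hij, _⟩
            · subst hij
              exact hnot (heq2 ▸ hv)
            · omega
            · omega
      have hih := ih (i + 1) (by omega) (by omega)
      have hpar : Even (d + 1) ↔ ¬ Even d := Nat.even_add_one
      rw [hstep, hih, hpar]
      tauto
  refine ⟨Set.inter_subset_right, ?_, ?_⟩
  · intro u hu v hv huv hadj'
    exact hNind u hu.1 v hv.1 huv (Or.inl hadj')
  · intro u huH hunot
    have huN : u ∉ N' := fun h => hunot ⟨h, huH⟩
    obtain ⟨v, hv, hadj'⟩ := hNabs u (Or.inl huH) huN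
    rcases hadj' with hH | ⟨j, hj, hueq, hveq⟩
    · exact ⟨v, ⟨hv, (H.adj_dom hH).2⟩, hH⟩
    · -- u is on the ear and in H, so j = 0
      have hj0 : j = 0 := by
        by_contra hj0
        exact hint j (by omega) hj (hueq ▸ huH)
      subst hj0
      -- so u = x 0 ∉ N' and v = x 1 ∈ N'
      have hx1 : e.x 1 ∈ N' := hveq ▸ hv
      have halt := alt (r - 1) 1 (by omega) le_rfl
      rcases hcase with ⟨h0, _⟩ | ⟨h0, _⟩ | ⟨h0, hrN, hev⟩ | ⟨h0, hrN, hodd⟩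
      · exact absurd (hueq ▸ h0) huN
      · exact absurd (hueq ▸ h0) huN
      · have : ¬ Even (r - 1) := by
          rw [Nat.even_iff] at hev ⊢; omega
        exact absurd ((halt.1 hx1).1 hrN) this
      · have : Even (r - 1) := by
          rw [Nat.odd_iff] at hodd; rw [Nat.even_iff]; omega
        exact absurd ((halt.1 hx1).2 this) hrN
end

section
/- Let D be a strong nonseparable digraph, let H be a strong nonseparable subdigraph of D, and let P = (x_0, x_1, ..., x_{r-1}, x_r) be an ear of H in D with length l(P) ≥ 2. If H has no kernel and H' = H ∪ P has a kernel N', then one of the following holds: (1) x_0 ∉ N', x_r ∈ N' and l(P) is odd; (2) x_0, x_r ∉ N' and l(P) is even. -/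
/-- If `H` has no kernel but `H' = H ∪ P` has a kernel `N'`,
then either `x_0 ∉ N'`, `x_r ∈ N'` and `l(P)` is odd, or `x_0, x_r ∉ N'` and
`l(P)` is even. -/
theorem kernel_of_union_options {V : Type} (D H : Digr V)
    (hfin : D.verts.Finite) (hloop : D.Loopless)
    (hDstrong : D.IsStrong) (hDns : D.IsNonseparable)
    (hsub : H.IsSubdigraph D) (hHstrong : H.IsStrong) (hHns : H.IsNonseparable)
    (e : VSeq V) (he : IsEarOf D H e) (hlen : 2 ≤ e.len)
    (hnoK : ¬ HasKernel H)
    (N' : Set V) (hN' : IsKernel (H.union e.toDigr) N') :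
    (e.x 0 ∉ N' ∧ e.x e.len ∈ N' ∧ Odd e.len) ∨
    (e.x 0 ∉ N' ∧ e.x e.len ∉ N' ∧ Even e.len) := by
  obtain ⟨hl1, hadj, hx0H, hxlH, hint, hinj⟩ := he
  obtain ⟨hNsub, hNind, hNabs⟩ := hN'
  have hearadj : ∀ i < e.len, (H.union e.toDigr).Adj (e.x i) (e.x (i + 1)) :=
    fun i hi => Or.inr ⟨i, hi, rfl, rfl⟩
  have hne : ∀ i, 1 ≤ i → i < e.len → e.x i ≠ e.x (i + 1) := by
    intro i h1 h2 heq
    rcases hinj i (le_of_lt h2) (i + 1) h2 heq with h | ⟨h0, _⟩ | ⟨_, h0⟩ <;> omega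
  -- Step 1: x_0 ∉ N' and x_0 has no H-out-neighbour in N'
  have step1 : e.x 0 ∉ N' ∧ ∀ v ∈ N', ¬ H.Adj (e.x 0) v := by
    by_contra hcon
    push_neg at hcon
    apply hnoK
    refine ⟨N' ∩ H.verts, Set.inter_subset_right, ?_, ?_⟩
    · intro u hu v hv huv h
      exact hNind u hu.1 v hv.1 huv (Or.inl h)
    · intro u huH huN
      have huN' : u ∉ N' := fun h => huN ⟨h, huH⟩
      obtain ⟨v, hvN, hadjv⟩ := hNabs u (Or.inl huH) huN'
      rcases hadjv with h | ⟨j, hj, hu, hv⟩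
      · exact ⟨v, ⟨hvN, (H.adj_dom h).2⟩, h⟩
      · have hj0 : j = 0 := by
          by_contra hj0
          exact hint j (Nat.pos_of_ne_zero hj0) hj (hu ▸ huH)
        subst hj0
        subst hu
        obtain ⟨v', hv'N, hv'adj⟩ := hcon huN'
        exact ⟨v', ⟨hv'N, (H.adj_dom hv'adj).2⟩, hv'adj⟩
  -- Step 2: x_1 ∈ N'
  have step2 : e.x 1 ∈ N' := by
    obtain ⟨v, hvN, hadjv⟩ := hNabs (e.x 0) (Or.inl hx0H) step1.1
    rcases hadjv with h | ⟨j, hj, hu, hv⟩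
    · exact absurd h (step1.2 v hvN)
    · have hj0 : j = 0 := by
        rcases hinj 0 (Nat.zero_le _) j (le_of_lt hj) hu with h | ⟨_, h0⟩ | ⟨h0, _⟩ <;> omega
      subst hj0
      rw [hv] at hvN
      exact hvN
  -- Step 3: alternation on internal vertices
  have step3 : ∀ i, 1 ≤ i → i < e.len → (e.x (i + 1) ∈ N' ↔ e.x i ∉ N') := by
    intro i h1 h2
    constructor
    · intro h hi
      exact hNind (e.x i) hi (e.x (i + 1)) h (hne i h1 h2) (hearadj i h2)
    · intro hi
      obtain ⟨v, hvN, hadjv⟩ := hNabs (e.x i) (Or.inr ⟨i, le_of_lt h2, rfl⟩) hi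
      rcases hadjv with h | ⟨j, hj, hu, hv⟩
      · exact absurd (H.adj_dom h).1 (hint i h1 h2)
      · have hji : j = i := by
          rcases hinj i (le_of_lt h2) j (le_of_lt hj) hu with h | ⟨h0, _⟩ | ⟨h0, _⟩ <;> omega
        subst hji
        rw [hv] at hvN
        exact hvN
  -- Main claim: for 1 ≤ i ≤ len, x_i ∈ N' ↔ i odd
  have main : ∀ i, 1 ≤ i → i ≤ e.len → (e.x i ∈ N' ↔ Odd i) := by
    intro i
    induction i with
    | zero => omega
    | succ n ih =>
      intro _ hle
      rcases Nat.eq_zero_or_pos n with rfl | hn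
      · simpa using step2
      · have hIH := ih hn (le_of_lt (Nat.lt_of_lt_of_le (Nat.lt_succ_self n) hle))
        rw [step3 n hn (Nat.lt_of_succ_le hle), Nat.odd_add_one]
        rw [hIH]
  rcases Nat.even_or_odd e.len with hev | hod
  · refine Or.inr ⟨step1.1, ?_, hev⟩
    intro h
    exact (Nat.not_odd_iff_even.mpr hev) ((main e.len (by omega) le_rfl).mp h)
  · exact Or.inl ⟨step1.1, (main e.len (by omega) le_rfl).mpr hod, hod⟩
end

section
/- Let D be a strong nonseparable digraph with an ear decomposition (D_0, D_1, ..., D_k), and let P_{i-1} = (x_0, x_1, ..., x_{r-1}, x_r) be the ear of D_{i-1} in D, with l(P_{i-1}) ≥ 2. Suppose D_i has a kernel N and one of the following holds: (1) x_0, x_r ∈ N; (2) x_0 ∈ N and x_r ∉ N; (3) x_0 ∉ N, x_r ∈ N and l(P_{i-1}) is even; (4) x_0, x_r ∉ N and l(P_{i-1}) is odd. Then D_{i-1} has a kernel. -/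
set_option maxHeartbeats 1000000


/-- In an ear decomposition `(D_0, ..., D_k)`, if the ear
`P_{i-1} = (x_0, ..., x_r)` of `D_{i-1}` has length at least `2`, `D_i` has a
kernel `N` and one of the four listed conditions holds, then `D_{i-1}` has a
kernel. -/
theorem kernel_descends_in_ear_decomposition {V : Type} (D : Digr V)
    (hfin : D.verts.Finite) (hloop : D.Loopless)
    (hDstrong : D.IsStrong) (hDns : D.IsNonseparable)
    (E : EarDecomp D)
    (i : ℕ) (hi0 : 1 ≤ i) (hik : i ≤ E.k)
    (hlen : 2 ≤ (E.ears (i - 1)).len)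
    (N : Set V) (hN : IsKernel (E.Ds i) N)
    (hcase :
      ((E.ears (i - 1)).x 0 ∈ N ∧ (E.ears (i - 1)).x (E.ears (i - 1)).len ∈ N) ∨
      ((E.ears (i - 1)).x 0 ∈ N ∧ (E.ears (i - 1)).x (E.ears (i - 1)).len ∉ N) ∨
      ((E.ears (i - 1)).x 0 ∉ N ∧ (E.ears (i - 1)).x (E.ears (i - 1)).len ∈ N ∧
        Even (E.ears (i - 1)).len) ∨
      ((E.ears (i - 1)).x 0 ∉ N ∧ (E.ears (i - 1)).x (E.ears (i - 1)).len ∉ N ∧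
        Odd (E.ears (i - 1)).len)) :
    HasKernel (E.Ds (i - 1)) := by
  have hmk : i - 1 < E.k := by omega
  obtain ⟨hNsub, hNind, hNabs⟩ := hN
  obtain ⟨hlen1, hadjD, hx0H, hxrH, hint, hdist⟩ := E.isEar (i - 1) hmk
  have hstep : E.Ds i = (E.Ds (i - 1)).union (E.ears (i - 1)).toDigr := by
    have h := E.step (i - 1) hmk
    rwa [Nat.sub_add_cancel hi0] at h
  set P := E.ears (i - 1) with hP
  set H := E.Ds (i - 1) with hH
  set r := P.len with hr
  have hDiAdj : ∀ u v, (E.Ds i).Adj u v ↔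
      (H.Adj u v ∨ ∃ j, j < r ∧ u = P.x j ∧ v = P.x (j + 1)) := by
    intro u v
    rw [hstep]
    exact Iff.rfl
  have hxmem : ∀ j, j ≤ r → P.x j ∈ (E.Ds i).verts := by
    intro j hj
    rw [hstep]
    exact Or.inr ⟨j, hj, rfl⟩
  have hne : ∀ j, j < r → P.x j ≠ P.x (j + 1) := by
    intro j hj heq
    rcases hdist j (le_of_lt hj) (j + 1) hj heq with h | h | h <;> omega
  have hearAdj : ∀ j, j < r → (E.Ds i).Adj (P.x j) (P.x (j + 1)) := fun j hj =>
    (hDiAdj _ _).mpr (Or.inr ⟨j, hj, rfl, rfl⟩)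
  have key : ∀ j, 0 < j → j < r → (P.x j ∈ N ↔ P.x (j + 1) ∉ N) := by
    intro j h0 hl
    constructor
    · intro h1 h2
      exact hNind _ h1 _ h2 (hne j hl) (hearAdj j hl)
    · intro h2
      by_contra h1
      obtain ⟨v, hvN, hadj⟩ := hNabs (P.x j) (hxmem j (le_of_lt hl)) h1
      rcases (hDiAdj _ _).mp hadj with h | ⟨t, ht, hxt, hvt⟩
      · exact hint j h0 hl (H.adj_dom h).1
      · rcases hdist j (le_of_lt hl) t (le_of_lt ht) hxt with h | h | h
        · subst hvt
          exact h2 (h ▸ hvN)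
        · omega
        · omega
  have alt : ∀ t, t ≤ r - 1 → (P.x (r - t) ∈ N ↔ (Even t ↔ P.x r ∈ N)) := by
    intro t
    induction t with
    | zero => intro _; simp
    | succ t ih =>
      intro ht
      have ih' := ih (by omega)
      have h1 : r - (t + 1) + 1 = r - t := by omega
      have h2 := key (r - (t + 1)) (by omega) (by omega)
      rw [h1] at h2
      rw [h2, Nat.even_add_one]
      tauto
  have hmain : P.x 0 ∈ N ∨ P.x 1 ∉ N := by
    have halt := alt (r - 1) le_rfl
    have heq : r - (r - 1) = 1 := by omega
    rw [heq] at halt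
    rcases hcase with ⟨h0, _⟩ | ⟨h0, _⟩ | ⟨h0, hrN, hev⟩ | ⟨h0, hrN, hodd⟩
    · exact Or.inl h0
    · exact Or.inl h0
    · refine Or.inr fun h => ?_
      obtain ⟨d, hd⟩ := (halt.mp h).mpr hrN
      obtain ⟨c, hc⟩ := hev
      omega
    · refine Or.inr fun h => ?_
      have hev1 : ¬ Even (r - 1) := fun he => hrN ((halt.mp h).mp he)
      obtain ⟨c, hc⟩ := hodd
      exact hev1 ⟨c, by omega⟩
  refine ⟨N ∩ H.verts, Set.inter_subset_right, ?_, ?_⟩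
  · intro u hu v hv huv hadj
    exact hNind u hu.1 v hv.1 huv ((hDiAdj u v).mpr (Or.inl hadj))
  · intro u huH huN'
    have huN : u ∉ N := fun h => huN' ⟨h, huH⟩
    have huDi : u ∈ (E.Ds i).verts := by rw [hstep]; exact Or.inl huH
    obtain ⟨v, hvN, hadj⟩ := hNabs u huDi huN
    rcases (hDiAdj u v).mp hadj with h | ⟨t, ht, hut, hvt⟩
    · exact ⟨v, ⟨hvN, (H.adj_dom h).2⟩, h⟩
    · have ht0 : t = 0 := by
        by_contra h0
        exact hint t (Nat.pos_of_ne_zero h0) ht (hut ▸ huH)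
      subst ht0
      rcases hmain with h | h
      · exact absurd (hut ▸ h) huN
      · exact absurd (hvt ▸ h) (fun h' => h' hvN)
end

section
/- Let D be a strong nonseparable digraph with an ear decomposition (D_0, D_1, ..., D_k), and let P_{i-1} = (x_0, x_1, ..., x_{r-1}, x_r) be the ear of D_{i-1} in D, with l(P_{i-1}) ≥ 2. If D_i has a kernel N but D_{i-1} has no kernel, then one of the following holds: (1) x_0 ∉ N, x_r ∈ N and l(P_{i-1}) is odd; (2) x_0, x_r ∉ N and l(P_{i-1}) is even. -/
/-- In an ear decomposition `(D_0, ..., D_k)`, if the ear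
`P_{i-1} = (x_0, ..., x_r)` of `D_{i-1}` has length at least `2`, `D_i` has a
kernel `N` but `D_{i-1}` has no kernel, then either `x_0 ∉ N`, `x_r ∈ N` and
`l(P_{i-1})` is odd, or `x_0, x_r ∉ N` and `l(P_{i-1})` is even. -/
theorem kernel_descent_options {V : Type} (D : Digr V)
    (hfin : D.verts.Finite) (hloop : D.Loopless)
    (hDstrong : D.IsStrong) (hDns : D.IsNonseparable)
    (E : EarDecomp D)
    (i : ℕ) (hi0 : 1 ≤ i) (hik : i ≤ E.k)
    (hlen : 2 ≤ (E.ears (i - 1)).len)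
    (N : Set V) (hN : IsKernel (E.Ds i) N)
    (hnoK : ¬ HasKernel (E.Ds (i - 1))) :
    ((E.ears (i - 1)).x 0 ∉ N ∧ (E.ears (i - 1)).x (E.ears (i - 1)).len ∈ N ∧
      Odd (E.ears (i - 1)).len) ∨
    ((E.ears (i - 1)).x 0 ∉ N ∧ (E.ears (i - 1)).x (E.ears (i - 1)).len ∉ N ∧
      Even (E.ears (i - 1)).len) := by
  classical
  set P := E.ears (i - 1) with hP
  set Dp := E.Ds (i - 1) with hDp
  set Di := E.Ds i with hDi
  have hik' : i - 1 < E.k := by omega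
  obtain ⟨hlen1, harc, hx0, hxr, hint, hinj⟩ := E.isEar (i - 1) hik'
  have hstep : Di = Dp.union P.toDigr := by
    have h := E.step (i - 1) hik'
    have hii : i - 1 + 1 = i := by omega
    rw [hii] at h; exact h
  obtain ⟨hNsub, hNind, hNabs⟩ := hN
  set r := P.len with hr
  have hDiAdj : ∀ u v, Di.Adj u v ↔ Dp.Adj u v ∨ ∃ t, t < r ∧ u = P.x t ∧ v = P.x (t + 1) := by
    intro u v; rw [hstep]; exact Iff.rfl
  have hDiverts : ∀ j, j ≤ r → P.x j ∈ Di.verts := by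
    intro j hj; rw [hstep]; exact Or.inr ⟨j, hj, rfl⟩
  have hPD : ∀ j, j < r → Di.Adj (P.x j) (P.x (j + 1)) := by
    intro j hj; exact (hDiAdj _ _).2 (Or.inr ⟨j, hj, rfl, rfl⟩)
  have hne : ∀ j, j < r → P.x j ≠ P.x (j + 1) := by
    intro j hj h
    have h2 := harc j hj
    rw [h] at h2
    exact hloop _ h2
  have hsub : ∀ u v, Dp.Adj u v → Di.Adj u v := fun u v h => (hDiAdj u v).2 (Or.inl h)
  have hsubv : Dp.verts ⊆ Di.verts := by rw [hstep]; exact Set.subset_union_left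
  have onlyOut : ∀ j, 0 < j → j < r → ∀ v, Di.Adj (P.x j) v → v = P.x (j + 1) := by
    intro j hj1 hjr v hadj
    rcases (hDiAdj _ _).1 hadj with h | ⟨t, ht, he, rfl⟩
    · exact absurd (Dp.adj_dom h).1 (hint j hj1 hjr)
    · have : j = t := by
        rcases hinj j (le_of_lt hjr) t (le_of_lt ht) he with h | h | h <;> omega
      rw [this]
  have hker : (P.x 0 ∈ N ∨ ∃ v ∈ N ∩ Dp.verts, Dp.Adj (P.x 0) v) → HasKernel Dp := by
    intro hcase
    refine ⟨N ∩ Dp.verts, Set.inter_subset_right, ?_, ?_⟩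
    · intro u hu v hv huv h
      exact hNind u hu.1 v hv.1 huv (hsub _ _ h)
    · intro u hu hun
      have hunN : u ∉ N := fun h => hun ⟨h, hu⟩
      obtain ⟨v, hvN, hadj⟩ := hNabs u (hsubv hu) hunN
      rcases (hDiAdj _ _).1 hadj with h | ⟨t, ht, rfl, rfl⟩
      · exact ⟨v, ⟨hvN, (Dp.adj_dom h).2⟩, h⟩
      · have ht0 : t = 0 := by
          by_contra h0
          exact hint t (Nat.pos_of_ne_zero h0) ht hu
        subst ht0
        rcases hcase with h0 | ⟨v', hv', ha'⟩
        · exact absurd h0 hunN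
        · exact ⟨v', hv', ha'⟩
  have hx0N : P.x 0 ∉ N := fun h => hnoK (hker (Or.inl h))
  have hno0 : ¬ ∃ v ∈ N ∩ Dp.verts, Dp.Adj (P.x 0) v := fun h => hnoK (hker (Or.inr h))
  have hx1 : P.x 1 ∈ N := by
    obtain ⟨v, hvN, hadj⟩ := hNabs (P.x 0) (hDiverts 0 (by omega)) hx0N
    rcases (hDiAdj _ _).1 hadj with h | ⟨t, ht, he, rfl⟩
    · exact absurd ⟨v, ⟨hvN, (Dp.adj_dom h).2⟩, h⟩ hno0
    · have ht0 : t = 0 := by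
        rcases hinj 0 (by omega) t (le_of_lt ht) he with h | h | h <;> omega
      subst ht0; exact hvN
  have halt : ∀ j, (1 ≤ j ∧ j ≤ r) → (P.x j ∈ N ↔ Odd j) := by
    intro j
    induction j with
    | zero => intro h; omega
    | succ n ih =>
      rintro ⟨h1, h2⟩
      rcases Nat.eq_zero_or_pos n with rfl | hn
      · exact iff_of_true hx1 odd_one
      · have hih := ih ⟨hn, by omega⟩
        by_cases hmem : P.x n ∈ N
        · have hnodd : Odd n := hih.1 hmem
          have hnot : P.x (n + 1) ∉ N :=
            fun h => hNind _ hmem _ h (hne n (by omega)) (hPD n (by omega))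
          refine iff_of_false hnot ?_
          rw [Nat.odd_iff] at hnodd ⊢; omega
        · have hmem' : P.x (n + 1) ∈ N := by
            obtain ⟨v, hvN, hadj⟩ := hNabs (P.x n) (hDiverts n (by omega)) hmem
            have hv := onlyOut n hn (by omega) v hadj
            rw [hv] at hvN; exact hvN
          refine iff_of_true hmem' ?_
          have hnodd : ¬ Odd n := fun h => hmem (hih.2 h)
          rw [Nat.odd_iff] at hnodd ⊢; omega
  have hrN := halt r ⟨by omega, le_refl r⟩
  by_cases hodd : Odd r
  · exact Or.inl ⟨hx0N, hrN.2 hodd, hodd⟩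
  · refine Or.inr ⟨hx0N, fun h => hodd (hrN.1 h), ?_⟩
    rw [Nat.odd_iff] at hodd; rw [Nat.even_iff]; omega
end

section
/- Let D be a strong nonseparable digraph with an ear decomposition (D_0, D_1, ..., D_k) in which every ear has length at least 2. If D has a kernel, then one of the following holds: (1) D_j has a kernel for every j ∈ {0, ..., k}; in particular D_0 is an even cycle; or (2) there is j ∈ {0, ..., k} such that D_j has no kernel but D_i has a kernel for every i ≥ j+1; in particular, writing P_j = (x_0, x_1, ..., x_{r-1}, x_r) for the ear of D_j and N for a kernel of D_{j+1}, either (a) x_0 ∉ N, x_r ∈ N and l(P_j) is odd, or (b) x_0, x_r ∉ N and l(P_j) is even. -/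
/-- A directed cycle with a kernel has even length. -/
lemma cycle_kernel_even {V : Type} {D : Digr V} {n : ℕ}
    (hc : D.IsCycleOfLength n) (hk : HasKernel D) : Even n := by
  obtain ⟨hn, f, hinj, hverts, hadj⟩ := hc
  obtain ⟨N, hNsub, hNind, hNabs⟩ := hk
  haveI : NeZero n := ⟨by omega⟩
  haveI : Fact (1 < n) := ⟨hn⟩
  have hne : ∀ i : ZMod n, i ≠ i + 1 := by
    intro i h
    have : (1 : ZMod n) = 0 := by
      have := congrArg (fun x => x - i) h
      simpa using this.symm
    exact one_ne_zero this
  have step : ∀ i : ZMod n, (f (i + 1) ∈ N ↔ f i ∉ N) := by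
    intro i
    have harc : D.Adj (f i) (f (i + 1)) := (hadj _ _).2 ⟨i, rfl, rfl⟩
    constructor
    · intro h1 h0
      exact hNind _ h0 _ h1 (fun he => hne i (hinj he)) harc
    · intro h0
      obtain ⟨v, hvN, hv⟩ := hNabs (f i) (hverts ▸ ⟨i, rfl⟩) h0
      obtain ⟨m, hm1, hm2⟩ := (hadj _ _).1 hv
      have : m = i := (hinj hm1.symm)
      subst this
      exact hm2 ▸ hvN
  have claim : ∀ m : ℕ, (f ((m : ZMod n)) ∈ N ↔ (f 0 ∈ N ↔ Even m)) := by
    intro m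
    induction m with
    | zero => simp
    | succ m ih =>
      have hc : ((m + 1 : ℕ) : ZMod n) = (m : ZMod n) + 1 := by push_cast; ring
      rw [hc]
      rw [step ((m : ZMod n))]
      rw [Nat.even_add_one]
      tauto
  have h := claim n
  rw [ZMod.natCast_self] at h
  by_cases h0 : f 0 ∈ N <;> tauto

/-- Key case analysis on the ear when `H` has no kernel but `H ∪ e` has
kernel `N`. -/
lemma ear_kernel_cases {V : Type} {D H : Digr V} {e : VSeq V}
    (hEar : IsEarOf D H e) (hr : 2 ≤ e.len)
    (hnoK : ¬ HasKernel H) {N : Set V}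
    (hN : IsKernel (H.union e.toDigr) N) :
    (e.x 0 ∉ N ∧ e.x e.len ∈ N ∧ Odd e.len) ∨
    (e.x 0 ∉ N ∧ e.x e.len ∉ N ∧ Even e.len) := by
  obtain ⟨-, -, hx0, hxr, hint, hd⟩ := hEar
  obtain ⟨hNsub, hNind, hNabs⟩ := hN
  -- Step A: x0 ∉ N and x1 ∈ N, else N ∩ H.verts is a kernel of H
  have stepA : e.x 0 ∉ N ∧ e.x 1 ∈ N := by
    by_contra hcond
    apply hnoK
    refine ⟨N ∩ H.verts, Set.inter_subset_right, ?_, ?_⟩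
    · intro u hu v hv hne hAdj
      exact hNind u hu.1 v hv.1 hne (Or.inl hAdj)
    · intro u huH hu
      have huN : u ∉ N := fun h => hu ⟨h, huH⟩
      obtain ⟨v, hvN, hAdj⟩ := hNabs u (Or.inl huH) huN
      rcases hAdj with h | ⟨i, hir, hui, hvi⟩
      · exact ⟨v, ⟨hvN, (H.adj_dom h).2⟩, h⟩
      · have hi0 : i = 0 := by
          by_contra hi0
          exact hint i (Nat.pos_of_ne_zero hi0) hir (hui ▸ huH)
        subst hi0
        exact absurd ⟨hui ▸ huN, hvi ▸ hvN⟩ hcond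
  -- Step B: alternation along the interior of the ear
  have stepB : ∀ i, 1 ≤ i → i < e.len → (e.x (i + 1) ∈ N ↔ e.x i ∉ N) := by
    intro i h1 hir
    have harc : (H.union e.toDigr).Adj (e.x i) (e.x (i + 1)) :=
      Or.inr ⟨i, hir, rfl, rfl⟩
    have hnei : e.x i ≠ e.x (i + 1) := by
      intro h
      rcases hd i (le_of_lt hir) (i + 1) hir h with h' | ⟨h', -⟩ | ⟨h', -⟩ <;>
        omega
    constructor
    · intro h1N h0N
      exact hNind _ h0N _ h1N hnei harc
    · intro h0N
      obtain ⟨v, hvN, hAdj⟩ :=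
        hNabs (e.x i) (Or.inr ⟨i, le_of_lt hir, rfl⟩) h0N
      rcases hAdj with h | ⟨m, hmr, hum, hvm⟩
      · exact absurd ((H.adj_dom h).1) (hint i h1 hir)
      · have : m = i := by
          rcases hd i (le_of_lt hir) m (le_of_lt hmr) hum with h' | ⟨h', h''⟩ |
            ⟨h', h''⟩ <;> omega
        subst this
        exact hvm ▸ hvN
  -- Step C: x i ∈ N ↔ Odd i for 1 ≤ i ≤ len
  have stepC : ∀ i, 1 ≤ i → i ≤ e.len → (e.x i ∈ N ↔ Odd i) := by
    intro i
    induction i with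
    | zero => intro h; omega
    | succ i ih =>
      intro _ hle
      rcases Nat.eq_zero_or_pos i with rfl | hi
      · exact ⟨fun _ => odd_one, fun _ => stepA.2⟩
      · rw [stepB i hi (by omega), ih hi (by omega), Nat.not_odd_iff_even,
          Nat.odd_add_one, Nat.not_odd_iff_even]
  have hxrN := stepC e.len (by omega) le_rfl
  rcases Nat.even_or_odd e.len with hev | hod
  · exact Or.inr ⟨stepA.1, fun h => (Nat.not_odd_iff_even.mpr hev) (hxrN.1 h), hev⟩
  · exact Or.inl ⟨stepA.1, hxrN.2 hod, hod⟩

/-- Let `(D_0, ..., D_k)` be an ear decomposition of `D` with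
all ears of length at least `2`.  If `D` has a kernel, then either every `D_j`
has a kernel (and `D_0` is an even cycle), or there is a `j` such that `D_j`
has no kernel, every `D_i` with `i ≥ j+1` has a kernel, and every kernel `N`
of `D_{j+1}` satisfies one of the two listed conditions on the ear `P_j`. -/
theorem kernel_ear_decomposition_dichotomy {V : Type} (D : Digr V)
    (hfin : D.verts.Finite) (hloop : D.Loopless)
    (hDstrong : D.IsStrong) (hDns : D.IsNonseparable)
    (E : EarDecomp D)
    (hlen : ∀ i < E.k, 2 ≤ (E.ears i).len)
    (hK : HasKernel D) :
    ((∀ j ≤ E.k, HasKernel (E.Ds j)) ∧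
      ∃ n, Even n ∧ (E.Ds 0).IsCycleOfLength n) ∨
    (∃ j < E.k, ¬ HasKernel (E.Ds j) ∧
      (∀ i, j + 1 ≤ i → i ≤ E.k → HasKernel (E.Ds i)) ∧
      ∀ N : Set V, IsKernel (E.Ds (j + 1)) N →
        (((E.ears j).x 0 ∉ N ∧ (E.ears j).x (E.ears j).len ∈ N ∧
            Odd (E.ears j).len) ∨
         ((E.ears j).x 0 ∉ N ∧ (E.ears j).x (E.ears j).len ∉ N ∧
            Even (E.ears j).len))) := by
  classical
  by_cases hall : ∀ j ≤ E.k, HasKernel (E.Ds j)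
  · left
    refine ⟨hall, ?_⟩
    obtain ⟨n, hn⟩ := E.base
    exact ⟨n, cycle_kernel_even hn (hall 0 (Nat.zero_le _)), hn⟩
  · right
    push_neg at hall
    obtain ⟨j₀, hj₀k, hj₀⟩ := hall
    set P : ℕ → Prop := fun j => ¬ HasKernel (E.Ds j) with hP
    set j := Nat.findGreatest P E.k with hj
    have hPj : P j := Nat.findGreatest_spec hj₀k hj₀
    have hjk : j ≤ E.k := Nat.findGreatest_le E.k
    have hjlt : j < E.k := by
      rcases Nat.lt_or_ge j E.k with h | h
      · exact h
      · exfalso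
        have : j = E.k := le_antisymm hjk h
        exact hPj (this ▸ (show HasKernel (E.Ds E.k) by rw [E.top]; exact hK))
    refine ⟨j, hjlt, hPj, ?_, ?_⟩
    · intro i hi1 hi2
      by_contra hnk
      exact Nat.findGreatest_is_greatest (P := P) (show j < i by omega) hi2 hnk
    · intro N hNk
      have hstep := E.step j hjlt
      rw [hstep] at hNk
      exact ear_kernel_cases (E.isEar j hjlt) (hlen j hjlt) hPj hNk
end

section
/- Let D be a strong nonseparable digraph, let H be a strong nonseparable subdigraph of D, and let P = (x_0, x_1, ..., x_{r-1}, x_r) be an ear of H in D with length l(P) ≥ 2. Suppose H has a kernel N and one of the following holds: (1) x_0, x_r ∈ N and l(P) is even; (2) x_0 ∈ N, x_r ∉ N and l(P) is odd; (3) x_0 ∉ N and x_r ∈ N; (4) x_0, x_r ∉ N. Then H' = H ∪ P has a kernel. -/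
/-- If `H` has a kernel `N` and one of the four listed
conditions on the ends of the ear `P = (x_0, ..., x_r)` holds, then
`H' = H ∪ P` has a kernel. -/
theorem kernel_extends_to_union {V : Type} (D H : Digr V)
    (hfin : D.verts.Finite) (hloop : D.Loopless)
    (hDstrong : D.IsStrong) (hDns : D.IsNonseparable)
    (hsub : H.IsSubdigraph D) (hHstrong : H.IsStrong) (hHns : H.IsNonseparable)
    (e : VSeq V) (he : IsEarOf D H e) (hlen : 2 ≤ e.len)
    (N : Set V) (hN : IsKernel H N)
    (hcase :
      (e.x 0 ∈ N ∧ e.x e.len ∈ N ∧ Even e.len) ∨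
      (e.x 0 ∈ N ∧ e.x e.len ∉ N ∧ Odd e.len) ∨
      (e.x 0 ∉ N ∧ e.x e.len ∈ N) ∨
      (e.x 0 ∉ N ∧ e.x e.len ∉ N)) :
    HasKernel (H.union e.toDigr) := by
  classical
  obtain ⟨hr1, harcs, hx0, hxr, hint, hinj⟩ := he
  obtain ⟨hNsub, hNind, hNabs⟩ := hN
  set r := e.len with hrdef
  set t : ℕ := if e.x r ∈ N then 0 else 1 with ht
  have htle : t ≤ 1 := by rw [ht]; split <;> omega
  have hA : e.x r ∈ N ↔ t = 0 := by rw [ht]; split <;> simp_all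
  have hB : e.x 0 ∈ N → (1 + t) % 2 ≠ r % 2 := by
    intro h0
    rcases hcase with ⟨_, hrN, heven⟩ | ⟨_, hrN, hodd⟩ | ⟨h0', _⟩ | ⟨h0', _⟩
    · have ht0 : t = 0 := hA.mp hrN
      have := Nat.even_iff.mp heven
      omega
    · have ht1 : t = 1 := by rw [ht]; simp [hrN]
      have := Nat.odd_iff.mp hodd
      omega
    · exact absurd h0 h0'
    · exact absurd h0 h0'
  -- index injectivity helpers
  have hinj' : ∀ i ≤ r, ∀ j, 0 < j → j < r → e.x i = e.x j → i = j := by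
    intro i hi j hj1 hj2 hij
    rcases hinj i hi j (le_of_lt hj2) hij with h | ⟨h1, h2⟩ | ⟨h1, h2⟩ <;> omega
  -- the candidate kernel
  refine ⟨N ∪ {v | ∃ i, 0 < i ∧ i < r ∧ (i + t) % 2 = r % 2 ∧ v = e.x i}, ?_, ?_, ?_⟩
  · rintro v (hv | ⟨i, h1, h2, _, rfl⟩)
    · exact Or.inl (hNsub hv)
    · exact Or.inr ⟨i, le_of_lt h2, rfl⟩
  · rintro u (hu | ⟨i₀, hi₀0, hi₀r, hp₀, rfl⟩) v
      (hv | ⟨j₀, hj₀0, hj₀r, hp₁, rfl⟩) hne (hadj | ⟨i, hir, hui, hvi⟩)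
    · exact hNind u hu v hv hne hadj
    · -- both in N, path arc
      have huH : e.x i ∈ H.verts := hui ▸ hNsub hu
      have hi0 : i = 0 := by
        by_contra h
        exact hint i (Nat.pos_of_ne_zero h) hir huH
      have hvH : e.x (i + 1) ∈ H.verts := hvi ▸ hNsub hv
      exact hint (i + 1) (by omega) (by omega) hvH
    · exact hint j₀ hj₀0 hj₀r (H.adj_dom hadj).2
    · -- u ∈ N, v = x j₀ added, path arc
      have huH : e.x i ∈ H.verts := hui ▸ hNsub hu
      have hi0 : i = 0 := by
        by_contra h
        exact hint i (Nat.pos_of_ne_zero h) hir huH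
      have hj1 : j₀ = i + 1 :=
        hinj' (i + 1) (by omega) j₀ hj₀0 hj₀r hvi.symm |>.symm
      have h0N : e.x 0 ∈ N := by rw [hi0] at hui; rwa [hui] at hu
      exact hB h0N (by omega)
    · exact hint i₀ hi₀0 hi₀r (H.adj_dom hadj).1
    · -- u = x i₀ added, v ∈ N, path arc
      have hii : i = i₀ := (hinj' i (le_of_lt hir) i₀ hi₀0 hi₀r hui.symm)
      have hvH : e.x (i + 1) ∈ H.verts := hvi ▸ hNsub hv
      have hir' : i + 1 = r := by
        by_contra h
        exact hint (i + 1) (by omega) (by omega) hvH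
      have hrN : e.x r ∈ N := by rw [← hir', ← hvi]; exact hv
      have ht0 : t = 0 := hA.mp hrN
      omega
    · exact hint i₀ hi₀0 hi₀r (H.adj_dom hadj).1
    · -- both added, path arc
      have hii : i = i₀ := (hinj' i (le_of_lt hir) i₀ hi₀0 hi₀r hui.symm)
      have hjj : j₀ = i + 1 :=
        (hinj' (i + 1) (by omega) j₀ hj₀0 hj₀r hvi.symm).symm
      omega
  · -- absorbency
    rintro u (huH | ⟨i, (hi : i ≤ r), rfl⟩) huN
    · have huN' : u ∉ N := fun h => huN (Or.inl h)
      obtain ⟨v, hv, hadj⟩ := hNabs u huH huN'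
      exact ⟨v, Or.inl hv, Or.inl hadj⟩
    · by_cases hiH : e.x i ∈ H.verts
      · have huN' : e.x i ∉ N := fun h => huN (Or.inl h)
        obtain ⟨v, hv, hadj⟩ := hNabs _ hiH huN'
        exact ⟨v, Or.inl hv, Or.inl hadj⟩
      · have hi0 : 0 < i := by
          rcases Nat.eq_zero_or_pos i with h | h
          · exact absurd (h ▸ hx0) hiH
          · exact h
        have hirlt : i < r := by
          rcases lt_or_eq_of_le hi with h | h
          · exact h
          · exact absurd (h ▸ hxr) hiH
        have hpar : (i + t) % 2 ≠ r % 2 := fun h =>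
          huN (Or.inr ⟨i, hi0, hirlt, h, rfl⟩)
        have hpar1 : (i + 1 + t) % 2 = r % 2 := by omega
        by_cases hir : i + 1 < r
        · exact ⟨e.x (i + 1), Or.inr ⟨i + 1, by omega, hir, hpar1, rfl⟩,
            Or.inr ⟨i, hirlt, rfl, rfl⟩⟩
        · have hieq : i + 1 = r := by omega
          have ht0 : t = 0 := by omega
          have hrN : e.x r ∈ N := hA.mpr ht0
          refine ⟨e.x r, Or.inl hrN, Or.inr ⟨i, hirlt, rfl, ?_⟩⟩
          rw [hieq]
end

section
/- Let D be a strong nonseparable digraph, let H be a strong nonseparable subdigraph of D, and let P = (x_0, x_1, ..., x_{r-1}, x_r) be an ear of H in D with length l(P) ≥ 2. If H has a kernel N and H' = H ∪ P has no kernel, then one of the following holds: (1) x_0, x_r ∈ N and l(P) is odd; (2) x_0 ∈ N, x_r ∉ N and l(P) is even. -/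
lemma exists_kernel_union {V : Type} (D H : Digr V) (e : VSeq V)
    (he : IsEarOf D H e) (hlen : 2 ≤ e.len)
    (N : Set V) (hN : IsKernel H N) (S : Set ℕ)
    (hS1 : ∀ i ∈ S, 0 < i ∧ i < e.len)
    (hS2 : ∀ i ∈ S, i + 1 ∉ S)
    (hS3 : ∀ i, 0 < i → i + 1 < e.len → i ∉ S → i + 1 ∈ S)
    (hS4 : 1 ∈ S → e.x 0 ∉ N)
    (hS5 : e.len - 1 ∈ S ∨ e.x e.len ∈ N)
    (hS6 : e.len - 1 ∈ S → e.x e.len ∉ N) :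
    HasKernel (H.union e.toDigr) := by
  obtain ⟨hlen1, harcs, h0H, hrH, hint, hinj⟩ := he
  obtain ⟨hNsub, hNind, hNabs⟩ := hN
  have hintN : ∀ i, 0 < i → i < e.len → e.x i ∉ N :=
    fun i h1 h2 h => hint i h1 h2 (hNsub h)
  refine ⟨N ∪ e.x '' S, ?_, ?_, ?_⟩
  · rintro u (hu | ⟨i, hiS, rfl⟩)
    · exact Set.mem_union_left _ (hNsub hu)
    · exact Set.mem_union_right _ ⟨i, (hS1 i hiS).2.le, rfl⟩
  · rintro u hu v hv hne hadj
    cases hadj with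
    | inl hadj =>
      have huH := (H.adj_dom hadj).1
      have hvH := (H.adj_dom hadj).2
      have hu' : u ∈ N := by
        rcases hu with h | ⟨i, hiS, rfl⟩
        · exact h
        · exact absurd huH (hint i (hS1 i hiS).1 (hS1 i hiS).2)
      have hv' : v ∈ N := by
        rcases hv with h | ⟨i, hiS, rfl⟩
        · exact h
        · exact absurd hvH (hint i (hS1 i hiS).1 (hS1 i hiS).2)
      exact hNind u hu' v hv' hne hadj
    | inr hadj =>
      obtain ⟨k, hk, hu1, hv1⟩ := hadj
      subst hu1; subst hv1
      rcases hv with hvN | ⟨j, hjS, hj⟩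
      · have hkr : k + 1 = e.len := by
          by_contra h
          exact hintN (k + 1) (Nat.succ_pos k) (lt_of_le_of_ne hk h) hvN
        rcases hu with huN | ⟨i, hiS, hi⟩
        · have hk0 : k = 0 := by
            by_contra h
            exact hintN k (Nat.pos_of_ne_zero h) hk huN
          omega
        · have hik : i = k := by
            rcases hinj i (hS1 i hiS).2.le k hk.le hi with h | ⟨h, _⟩ | ⟨h, _⟩
            · exact h
            · exact absurd h (hS1 i hiS).1.ne'
            · exact absurd h (hS1 i hiS).2.ne
          have : e.len - 1 ∈ S := by
            have h : e.len - 1 = i := by omega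
            rw [h]; exact hiS
          exact hS6 this (hkr ▸ hvN)
      · have hjk : j = k + 1 := by
          rcases hinj j (hS1 j hjS).2.le (k + 1) hk hj with h | ⟨h, _⟩ | ⟨h, h'⟩
          · exact h
          · exact absurd h (hS1 j hjS).1.ne'
          · exact absurd h (hS1 j hjS).2.ne
        subst hjk
        rcases hu with huN | ⟨i, hiS, hi⟩
        · have hk0 : k = 0 := by
            by_contra h
            exact hintN k (Nat.pos_of_ne_zero h) hk huN
          subst hk0
          exact hS4 hjS huN
        · have hik : i = k := by
            rcases hinj i (hS1 i hiS).2.le k hk.le hi with h | ⟨h, _⟩ | ⟨h, _⟩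
            · exact h
            · exact absurd h (hS1 i hiS).1.ne'
            · exact absurd h (hS1 i hiS).2.ne
          exact hS2 i hiS (by rw [hik]; exact hjS)
  · rintro u hu huN
    have habs : u ∈ H.verts → ∃ v ∈ N ∪ e.x '' S, (H.union e.toDigr).Adj u v := by
      intro huH
      have hun : u ∉ N := fun h => huN (Set.mem_union_left _ h)
      obtain ⟨v, hvN, hadj⟩ := hNabs u huH hun
      exact ⟨v, Set.mem_union_left _ hvN, Or.inl hadj⟩
    rcases hu with huH | ⟨i, hir, rfl⟩
    · exact habs huH
    · rcases eq_or_ne i 0 with rfl | hi0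
      · exact habs h0H
      rcases eq_or_ne i e.len with rfl | hir'
      · exact habs hrH
      have hiS : i ∉ S := fun h => huN (Set.mem_union_right _ ⟨i, h, rfl⟩)
      have hilt : i < e.len := lt_of_le_of_ne hir hir'
      rcases eq_or_ne (i + 1) e.len with hieq | hne2
      · have hnS : e.len - 1 ∉ S := by
          have h : e.len - 1 = i := by omega
          rw [h]; exact hiS
        have hxr : e.x e.len ∈ N := hS5.resolve_left hnS
        exact ⟨e.x e.len, Set.mem_union_left _ hxr,
          Or.inr ⟨i, hilt, rfl, by rw [hieq]⟩⟩
      · have h1 : i + 1 ∈ S :=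
          hS3 i (Nat.pos_of_ne_zero hi0) (lt_of_le_of_ne hilt hne2) hiS
        exact ⟨e.x (i + 1), Set.mem_union_right _ ⟨i + 1, h1, rfl⟩,
          Or.inr ⟨i, hilt, rfl, rfl⟩⟩

/-- If `H` has a kernel `N` but `H' = H ∪ P` has no kernel,
then either `x_0, x_r ∈ N` and `l(P)` is odd, or `x_0 ∈ N`, `x_r ∉ N` and
`l(P)` is even. -/
theorem kernel_not_extending_options {V : Type} (D H : Digr V)
    (hfin : D.verts.Finite) (hloop : D.Loopless)
    (hDstrong : D.IsStrong) (hDns : D.IsNonseparable)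
    (hsub : H.IsSubdigraph D) (hHstrong : H.IsStrong) (hHns : H.IsNonseparable)
    (e : VSeq V) (he : IsEarOf D H e) (hlen : 2 ≤ e.len)
    (N : Set V) (hN : IsKernel H N)
    (hnoK : ¬ HasKernel (H.union e.toDigr)) :
    (e.x 0 ∈ N ∧ e.x e.len ∈ N ∧ Odd e.len) ∨
    (e.x 0 ∈ N ∧ e.x e.len ∉ N ∧ Even e.len) := by
  by_cases hr : e.x e.len ∈ N
  · by_cases h0 : e.x 0 ∈ N
    · rcases Nat.even_or_odd e.len with hev | hod
      · exfalso
        apply hnoK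
        refine exists_kernel_union D H e he hlen N hN
          {i | 0 < i ∧ i < e.len ∧ i % 2 = e.len % 2}
          (fun i hi => ⟨hi.1, hi.2.1⟩) (fun i hi hj => ?_) (fun i h1 h2 h3 => ?_)
          (fun h1 => ?_) (Or.inr hr) (fun h => ?_)
        · obtain ⟨_, _, ha⟩ := hi; obtain ⟨_, _, hb⟩ := hj; omega
        · simp only [Set.mem_setOf_eq] at h3 ⊢; omega
        · exfalso
          obtain ⟨_, _, h⟩ := h1
          have := Nat.even_iff.mp hev
          omega
        · exfalso
          obtain ⟨hp, _, h⟩ := h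
          omega
      · exact Or.inl ⟨h0, hr, hod⟩
    · exfalso
      apply hnoK
      refine exists_kernel_union D H e he hlen N hN
        {i | 0 < i ∧ i < e.len ∧ i % 2 = e.len % 2}
        (fun i hi => ⟨hi.1, hi.2.1⟩) (fun i hi hj => ?_) (fun i h1 h2 h3 => ?_)
        (fun _ => h0) (Or.inr hr) (fun h => ?_)
      · obtain ⟨_, _, ha⟩ := hi; obtain ⟨_, _, hb⟩ := hj; omega
      · simp only [Set.mem_setOf_eq] at h3 ⊢; omega
      · exfalso
        obtain ⟨hp, _, h⟩ := h
        omega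
  · by_cases h0 : e.x 0 ∈ N
    · rcases Nat.even_or_odd e.len with hev | hod
      · exact Or.inr ⟨h0, hr, hev⟩
      · exfalso
        apply hnoK
        refine exists_kernel_union D H e he hlen N hN
          {i | 0 < i ∧ i < e.len ∧ i % 2 ≠ e.len % 2}
          (fun i hi => ⟨hi.1, hi.2.1⟩) (fun i hi hj => ?_) (fun i h1 h2 h3 => ?_)
          (fun h1 => ?_) (Or.inl ⟨by omega, by omega, by omega⟩) (fun _ => hr)
        · obtain ⟨_, _, ha⟩ := hi; obtain ⟨_, _, hb⟩ := hj; omega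
        · simp only [Set.mem_setOf_eq] at h3 ⊢; omega
        · exfalso
          obtain ⟨_, _, h⟩ := h1
          have := Nat.odd_iff.mp hod
          omega
    · exfalso
      apply hnoK
      refine exists_kernel_union D H e he hlen N hN
        {i | 0 < i ∧ i < e.len ∧ i % 2 ≠ e.len % 2}
        (fun i hi => ⟨hi.1, hi.2.1⟩) (fun i hi hj => ?_) (fun i h1 h2 h3 => ?_)
        (fun _ => h0) (Or.inl ⟨by omega, by omega, by omega⟩) (fun _ => hr)
      · obtain ⟨_, _, ha⟩ := hi; obtain ⟨_, _, hb⟩ := hj; omega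
      · simp only [Set.mem_setOf_eq] at h3 ⊢; omega
end

section
/- Let D be a strong digraph admitting an ear decomposition in which every ear has length at least 2 (i.e., D ∈ LE_2). Then the chromatic number of D satisfies χ(D) ≤ 3; that is, the vertices of D can be properly colored with 3 colors so that any two vertices joined by an arc (in either direction) receive different colors. -/
lemma fin3_exists_ne : ∀ a b : Fin 3, ∃ c : Fin 3, c ≠ a ∧ c ≠ b := by decide

/-- Color for vertex `i` of a directed cycle on `ZMod n`. -/
def zColor (n : ℕ) (i : ZMod n) : Fin 3 :=
  ⟨if i.val + 1 = n then 2 else i.val % 2, by split_ifs <;> omega⟩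

lemma zColor_ne (n : ℕ) (hn : 2 ≤ n) (i : ZMod n) : zColor n i ≠ zColor n (i + 1) := by
  haveI : NeZero n := ⟨by omega⟩
  haveI : Fact (1 < n) := ⟨by omega⟩
  have hi : i.val < n := ZMod.val_lt i
  have h1 : (1 : ZMod n).val = 1 := ZMod.val_one n
  have hadd : (i + 1).val = (i.val + 1) % n := by rw [ZMod.val_add, h1]
  intro heq
  simp only [zColor, Fin.mk.injEq] at heq
  by_cases hx : i.val + 1 = n
  · have hy : (i + 1).val = 0 := by rw [hadd, hx, Nat.mod_self]
    rw [if_pos hx, hy] at heq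
    split_ifs at heq <;> omega
  · have hy : (i + 1).val = i.val + 1 := by rw [hadd, Nat.mod_eq_of_lt (by omega)]
    rw [if_neg hx, hy] at heq
    split_ifs at heq <;> omega

/-- Greedy coloring of the vertices of an ear, with prescribed end colors. -/
noncomputable def earColor (len : ℕ) (a b : Fin 3) : ℕ → Fin 3
  | 0 => a
  | (j + 1) =>
    if j + 1 = len then b
    else (fin3_exists_ne (earColor len a b j) b).choose

lemma earColor_zero (len : ℕ) (a b : Fin 3) : earColor len a b 0 = a := rfl

lemma earColor_last (len : ℕ) (a b : Fin 3) (h : 1 ≤ len) :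
    earColor len a b len = b := by
  obtain ⟨m, rfl⟩ : ∃ m, len = m + 1 := ⟨len - 1, by omega⟩
  rw [earColor, if_pos rfl]

lemma earColor_step (len : ℕ) (a b : Fin 3) (h2 : 2 ≤ len) :
    ∀ j < len, earColor len a b j ≠ earColor len a b (j + 1) := by
  intro j hj
  by_cases hjl : j + 1 = len
  · obtain ⟨m, rfl⟩ : ∃ m, j = m + 1 := ⟨j - 1, by omega⟩
    have e1 : earColor len a b (m + 1) =
        (fin3_exists_ne (earColor len a b m) b).choose := by
      rw [earColor, if_neg (by omega)]
    have e2 : earColor len a b (m + 1 + 1) = b := by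
      rw [earColor, if_pos hjl]
    rw [e1, e2]
    exact (fin3_exists_ne (earColor len a b m) b).choose_spec.2
  · have e1 : earColor len a b (j + 1) =
        (fin3_exists_ne (earColor len a b j) b).choose := by
      rw [earColor, if_neg hjl]
    rw [e1]
    exact Ne.symm (fin3_exists_ne _ _).choose_spec.1

/-- Every directed cycle is properly 3-colorable. -/
lemma cycle_colorable {V : Type} (D : Digr V) (h : D.IsCycleDigr) :
    ∃ c : V → Fin 3, ∀ u v, D.Adj u v → c u ≠ c v := by
  classical
  obtain ⟨n, hn2, f, hfinj, _, hadj⟩ := h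
  refine ⟨fun v => if h : ∃ i, v = f i then zColor n h.choose else 0, ?_⟩
  have key : ∀ j : ZMod n,
      (if h : ∃ i, f j = f i then zColor n h.choose else 0) = zColor n j := by
    intro j
    rw [dif_pos ⟨j, rfl⟩]
    congr 1
    exact (hfinj (⟨j, rfl⟩ : ∃ i, f j = f i).choose_spec).symm
  intro u v huv
  rw [hadj] at huv
  obtain ⟨i, rfl, rfl⟩ := huv
  simp only []
  rw [key i, key (i + 1)]
  exact zColor_ne n hn2 i

/-- Extending a proper 3-coloring across an ear of length at least 2. -/
lemma ear_extend {V : Type} (D H : Digr V) (e : VSeq V)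
    (he : IsEarOf D H e) (hlen : 2 ≤ e.len)
    (c : V → Fin 3) (hc : ∀ u v, H.Adj u v → c u ≠ c v) :
    ∃ c' : V → Fin 3, ∀ u v, (H.union e.toDigr).Adj u v → c' u ≠ c' v := by
  classical
  obtain ⟨h1, harc, h0, hl, hint, hinj⟩ := he
  set a := c (e.x 0) with ha
  set b := c (e.x e.len) with hb
  set c' : V → Fin 3 := fun v =>
    if h : ∃ j, 0 < j ∧ j < e.len ∧ v = e.x j then earColor e.len a b h.choose
    else c v with hc'def
  have hmem : ∀ v ∈ H.verts, c' v = c v := by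
    intro v hv
    simp only [hc'def]
    rw [dif_neg]
    rintro ⟨j, hj0, hjl, rfl⟩
    exact hint j hj0 hjl hv
  have hx : ∀ j ≤ e.len, c' (e.x j) = earColor e.len a b j := by
    intro j hj
    by_cases hj0 : j = 0
    · subst hj0
      rw [hmem _ h0, earColor_zero]
    by_cases hjlen : j = e.len
    · subst hjlen
      rw [hmem _ hl, earColor_last _ _ _ (by omega)]
    · have hj0' : 0 < j := Nat.pos_of_ne_zero hj0
      have hjl : j < e.len := lt_of_le_of_ne hj hjlen
      have hex : ∃ j', 0 < j' ∧ j' < e.len ∧ e.x j = e.x j' := ⟨j, hj0', hjl, rfl⟩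
      simp only [hc'def]
      rw [dif_pos hex]
      obtain ⟨hc0, hcl, hceq⟩ := hex.choose_spec
      rcases hinj j hj hex.choose (le_of_lt hcl) hceq with h | ⟨h, h'⟩ | ⟨h, h'⟩
      · rw [← h]
      · omega
      · omega
  refine ⟨c', ?_⟩
  rintro u v (hH | ⟨j, hjl, rfl, rfl⟩)
  · obtain ⟨hu, hv⟩ := H.adj_dom hH
    rw [hmem u hu, hmem v hv]
    exact hc u v hH
  · rw [hx j (le_of_lt hjl), hx (j + 1) hjl]
    exact earColor_step e.len a b hlen j hjl

/-- Every strong (finite, loopless) digraph in `LE_2` has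
chromatic number at most 3: there is a proper 3-coloring of its vertices. -/
theorem chromatic_number_le_three_LE2 {V : Type} (D : Digr V)
    (hfin : D.verts.Finite) (hloop : D.Loopless)
    (hstrong : D.IsStrong) (hLE : InLE D 2) :
    ∃ c : V → Fin 3, ∀ u v, D.Adj u v → c u ≠ c v := by
  obtain ⟨E, hE⟩ := hLE
  suffices h : ∀ i ≤ E.k, ∃ c : V → Fin 3, ∀ u v, (E.Ds i).Adj u v → c u ≠ c v by
    obtain ⟨c, hc⟩ := h E.k le_rfl
    rw [E.top] at hc
    exact ⟨c, hc⟩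
  intro i
  induction i with
  | zero => exact fun _ => cycle_colorable _ E.base
  | succ i ih =>
    intro hik
    have hi : i < E.k := hik
    obtain ⟨c, hc⟩ := ih (le_of_lt hi)
    have := ear_extend D (E.Ds i) (E.ears i) (E.isEar i hi) (hE i hi) c hc
    rw [E.step i hi]
    exact this
end

section
/- Let D be a strong digraph admitting an ear decomposition in which every ear has length at least 2 (i.e., D ∈ LE_2). Then the dichromatic number of D satisfies 2 ≤ χ⃗(D) ≤ 3. -/
/-- `D` admits an `n`-coloring each of whose color classes induces an acyclic
subdigraph (no monochromatic directed closed walk, equivalently no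
monochromatic directed cycle). -/
def AcyclicallyColorable {V : Type} (D : Digr V) (n : ℕ) : Prop :=
  ∃ c : V → Fin n, ∀ v : V,
    ¬ Relation.TransGen (fun a b => D.Adj a b ∧ c a = c b) v v

private lemma zmod_val_lt_succ {n : ℕ} (hn : 2 ≤ n) {i : ZMod n} (h : i + 1 ≠ 0) :
    i.val < (i + 1).val := by
  haveI : NeZero n := ⟨by omega⟩
  haveI : Fact (1 < n) := ⟨by omega⟩
  have hv : (i + 1).val = (i.val + 1) % n := by
    rw [ZMod.val_add, ZMod.val_one]
  have hlt : i.val < n := ZMod.val_lt i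
  rcases Nat.lt_or_ge (i.val + 1) n with h1 | h1
  · rw [hv, Nat.mod_eq_of_lt h1]; omega
  · exfalso
    have hn1 : i.val + 1 = n := by omega
    have h0 : (i + 1).val = 0 := by rw [hv, hn1, Nat.mod_self]
    exact h ((ZMod.val_eq_zero _).mp h0)

private lemma cycle_no_mono {V : Type} {D : Digr V} {n : ℕ} (hn : 2 ≤ n)
    {f : ZMod n → V} (hinj : Function.Injective f)
    (hadj : ∀ u v, D.Adj u v ↔ ∃ i, u = f i ∧ v = f (i + 1))
    {W : Type} (c : V → W) (hc : ∀ i : ZMod n, i ≠ 0 → c (f i) ≠ c (f 0)) :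
    ∀ v, ¬ Relation.TransGen (fun a b => D.Adj a b ∧ c a = c b) v v := by
  haveI : NeZero n := ⟨by omega⟩
  haveI : Fact (1 < n) := ⟨by omega⟩
  have harc : ∀ a b, (D.Adj a b ∧ c a = c b) →
      ∃ i : ZMod n, a = f i ∧ b = f (i + 1) ∧ i + 1 ≠ 0 := by
    rintro a b ⟨hab, hcab⟩
    obtain ⟨i, rfl, rfl⟩ := (hadj _ _).1 hab
    refine ⟨i, rfl, rfl, ?_⟩
    intro h0
    rw [h0] at hcab
    have hi0 : i ≠ 0 := by
      intro hi; rw [hi, zero_add] at h0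
      exact one_ne_zero (α := ZMod n) h0
    exact hc i hi0 hcab
  have key : ∀ a b, Relation.TransGen (fun a b => D.Adj a b ∧ c a = c b) a b →
      ∃ i j : ZMod n, a = f i ∧ b = f j ∧ i.val < j.val := by
    intro a b h
    induction h with
    | single h =>
      obtain ⟨i, rfl, rfl, hne⟩ := harc _ _ h
      exact ⟨i, i + 1, rfl, rfl, zmod_val_lt_succ hn hne⟩
    | tail h1 h2 ih =>
      obtain ⟨i, j, rfl, rfl, hij⟩ := ih
      obtain ⟨j', hj', rfl, hne⟩ := harc _ _ h2
      have hjj : j = j' := hinj hj'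
      subst hjj
      exact ⟨i, j + 1, rfl, rfl, lt_trans hij (zmod_val_lt_succ hn hne)⟩
  intro v hv
  obtain ⟨i, j, hi, hj, hlt⟩ := key v v hv
  rw [hi] at hj
  have hij := hinj hj
  rw [hij] at hlt
  exact lt_irrefl _ hlt

private lemma step_no_mono {V : Type} {H : Digr V} {e : VSeq V}
    (he : 2 ≤ e.len)
    (hint : ∀ i, 0 < i → i < e.len → e.x i ∉ H.verts)
    (hinj : ∀ i ≤ e.len, ∀ j ≤ e.len, e.x i = e.x j →
      i = j ∨ (i = 0 ∧ j = e.len) ∨ (i = e.len ∧ j = 0))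
    (c : V → Fin 3)
    (hcol : c (e.x 1) ≠ c (e.x 0))
    (hH : ∀ v, ¬ Relation.TransGen (fun a b => H.Adj a b ∧ c a = c b) v v) :
    ∀ v, ¬ Relation.TransGen
      (fun a b => (H.union e.toDigr).Adj a b ∧ c a = c b) v v := by
  set G := H.union e.toDigr with hG
  -- arcs into internal vertices come only from the previous ear vertex
  have hinto : ∀ a j, 0 < j → j < e.len → G.Adj a (e.x j) → a = e.x (j - 1) := by
    intro a j hj0 hjlen hadj
    rcases hadj with h | h
    · exact absurd (H.adj_dom h).2 (hint j hj0 hjlen)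
    · obtain ⟨i, hi, ha, hb⟩ := h
      rcases hinj j (le_of_lt hjlen) (i + 1) hi hb with h1 | ⟨h1, h2⟩ | ⟨h1, h2⟩
      · have hji : j - 1 = i := by omega
        rw [hji]; exact ha
      · omega
      · omega
  have hintoR : ∀ a j, 0 < j → j < e.len → (G.Adj a (e.x j) ∧ c a = c (e.x j)) →
      2 ≤ j ∧ a = e.x (j - 1) := by
    rintro a j hj0 hjlen ⟨hadj, hcab⟩
    have ha := hinto a j hj0 hjlen hadj
    rcases Nat.lt_or_ge j 2 with hj2 | hj2
    · exfalso
      have hj1 : j = 1 := by omega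
      subst hj1
      simp only [Nat.sub_self] at ha
      rw [ha] at hcab
      exact hcol hcab.symm
    · exact ⟨hj2, ha⟩
  have hC : ∀ a b, Relation.TransGen (fun a b => G.Adj a b ∧ c a = c b) a b →
      ∀ j, 0 < j → j < e.len → b = e.x j → ∃ i, 0 < i ∧ i < j ∧ a = e.x i := by
    intro a b h
    induction h with
    | single h =>
      intro j hj0 hjl hb
      rw [hb] at h
      obtain ⟨hj2, ha⟩ := hintoR _ j hj0 hjl h
      exact ⟨j - 1, by omega, by omega, ha⟩
    | tail h1 h2 ih =>
      intro j hj0 hjl hb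
      rw [hb] at h2
      obtain ⟨hj2, hm⟩ := hintoR _ j hj0 hjl h2
      obtain ⟨i, hi0, hij, ha⟩ := ih (j - 1) (by omega) (by omega) hm
      exact ⟨i, hi0, by omega, ha⟩
  set Int : V → Prop := fun v => ∃ m, 0 < m ∧ m < e.len ∧ v = e.x m with hInt
  have harcH : ∀ a b, (G.Adj a b ∧ c a = c b) → ¬ Int a → ¬ Int b →
      H.Adj a b ∧ c a = c b := by
    rintro a b ⟨hab, hcab⟩ hIa hIb
    rcases hab with h | h
    · exact ⟨h, hcab⟩
    · obtain ⟨i, hi, rfl, rfl⟩ := h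
      rcases Nat.eq_zero_or_pos i with h0 | h0
      · subst h0; exact absurd ⟨1, Nat.one_pos, by omega, rfl⟩ hIb
      · exact absurd ⟨i, h0, hi, rfl⟩ hIa
  have hD : ∀ a b, Relation.TransGen (fun a b => G.Adj a b ∧ c a = c b) a b →
      ¬ Int a → ¬ Int b →
      Relation.TransGen (fun a b => H.Adj a b ∧ c a = c b) a b := by
    intro a b h
    induction h with
    | single h =>
      intro hIa hIb
      exact Relation.TransGen.single (harcH _ _ h hIa hIb)
    | @tail m b' h1 h2 ih =>
      intro hIa hIb
      rcases Classical.em (Int m) with hIm | hIm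
      · obtain ⟨j, hj0, hjl, hm⟩ := hIm
        obtain ⟨i, hi0, hij, ha⟩ := hC a m h1 j hj0 hjl hm
        exact absurd ⟨i, hi0, by omega, ha⟩ hIa
      · exact (ih hIa hIm).tail (harcH _ _ h2 hIm hIb)
  intro v hv
  rcases Classical.em (Int v) with hIv | hIv
  · obtain ⟨j, hj0, hjl, hveq⟩ := hIv
    obtain ⟨i, hi0, hij, hveq2⟩ := hC v v hv j hj0 hjl hveq
    rw [hveq] at hveq2
    rcases hinj j (le_of_lt hjl) i (by omega) hveq2 with h1 | ⟨h1, h2⟩ | ⟨h1, h2⟩ <;>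
      omega
  · exact hH v (hD v v hv hIv hIv)

private lemma exists_coloring {V : Type} (D : Digr V) (E : EarDecomp D)
    (hE : ∀ i < E.k, 2 ≤ (E.ears i).len) :
    ∀ i ≤ E.k, ∃ c : V → Fin 3,
      ∀ v, ¬ Relation.TransGen (fun a b => (E.Ds i).Adj a b ∧ c a = c b) v v := by
  intro i
  induction i with
  | zero =>
    intro _
    obtain ⟨n, hn, f, hinj, hverts, hadj⟩ := E.base
    classical
    refine ⟨fun v => if v = f 0 then 0 else 1, ?_⟩
    refine cycle_no_mono hn hinj hadj _ ?_
    intro i hi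
    rw [if_neg (fun h => hi (hinj h)), if_pos rfl]
    decide
  | succ i ih =>
    intro hik
    have hik' : i < E.k := hik
    obtain ⟨c, hc⟩ := ih (le_of_lt hik')
    obtain ⟨hlen1, harcs, h0, hend, hint, hinj⟩ := E.isEar i hik'
    have hlen2 := hE i hik'
    classical
    set d : Fin 3 := if c ((E.ears i).x 0) = 0 then 1 else 0 with hd
    have hdne : d ≠ c ((E.ears i).x 0) := by
      rw [hd]
      by_cases h : c ((E.ears i).x 0) = 0
      · rw [if_pos h, h]; decide
      · rw [if_neg h]; exact fun he => h he.symm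
    set c' : V → Fin 3 :=
      fun v => if ∃ m, 0 < m ∧ m < (E.ears i).len ∧ v = (E.ears i).x m then d
        else c v with hc'
    have hc'0 : c' ((E.ears i).x 0) = c ((E.ears i).x 0) := by
      rw [hc']
      apply if_neg
      rintro ⟨m, hm0, hml, hm⟩
      rcases hinj 0 (by omega) m (by omega) hm with h1 | ⟨h1, h2⟩ | ⟨h1, h2⟩ <;> omega
    have hc'1 : c' ((E.ears i).x 1) = d :=
      if_pos ⟨1, Nat.one_pos, by omega, rfl⟩
    have hc'old : ∀ v ∈ (E.Ds i).verts, c' v = c v := by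
      intro v hv
      rw [hc']
      apply if_neg
      rintro ⟨m, hm0, hml, rfl⟩
      exact hint m hm0 hml hv
    refine ⟨c', ?_⟩
    have hHnew : ∀ v, ¬ Relation.TransGen
        (fun a b => (E.Ds i).Adj a b ∧ c' a = c' b) v v := by
      intro v hv
      refine hc v (Relation.TransGen.mono ?_ _ _ hv)
      rintro a b ⟨hab, hcab⟩
      refine ⟨hab, ?_⟩
      rw [← hc'old a ((E.Ds i).adj_dom hab).1, ← hc'old b ((E.Ds i).adj_dom hab).2]
      exact hcab
    have hstep := step_no_mono hlen2 hint hinj c' (by rw [hc'0, hc'1]; exact hdne)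
      hHnew
    intro v hv
    rw [E.step i hik'] at hv
    exact hstep v hv

/-- Every strong (finite, loopless) digraph in `LE_2` has
dichromatic number between 2 and 3. -/
theorem dichromatic_number_LE2 {V : Type} (D : Digr V)
    (hfin : D.verts.Finite) (hloop : D.Loopless)
    (hstrong : D.IsStrong) (hLE : InLE D 2) :
    2 ≤ sInf {n : ℕ | AcyclicallyColorable D n} ∧
      sInf {n : ℕ | AcyclicallyColorable D n} ≤ 3 := by
  obtain ⟨E, hE⟩ := hLE
  obtain ⟨c3, hc3⟩ := exists_coloring D E hE E.k le_rfl
  rw [E.top] at hc3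
  have h3mem : 3 ∈ {n : ℕ | AcyclicallyColorable D n} := ⟨c3, hc3⟩
  constructor
  · refine le_csInf ⟨3, h3mem⟩ ?_
    intro m hm
    obtain ⟨c, hc⟩ := hm
    obtain ⟨n, hn, f, hinj, hverts, hadj⟩ := E.base
    by_contra hlt
    push_neg at hlt
    interval_cases m
    · exact (c (f 0)).elim0
    · have hadjD : ∀ i : ZMod n, D.Adj (f i) (f (i + 1)) :=
        fun i => (E.sub 0 (Nat.zero_le _)).2 ((hadj _ _).2 ⟨i, rfl, rfl⟩)
      have key : ∀ m : ℕ, Relation.TransGen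
          (fun a b => D.Adj a b ∧ c a = c b) (f 0) (f ((m + 1 : ℕ) : ZMod n)) := by
        intro m
        induction m with
        | zero =>
          refine Relation.TransGen.single ⟨?_, Subsingleton.elim _ _⟩
          have hcast : ((0 + 1 : ℕ) : ZMod n) = (0 : ZMod n) + 1 := by
            push_cast; ring
          rw [hcast]
          exact hadjD 0
        | succ m ih =>
          refine ih.tail ⟨?_, Subsingleton.elim _ _⟩
          have hcast : ((m + 1 + 1 : ℕ) : ZMod n) = ((m + 1 : ℕ) : ZMod n) + 1 := by
            push_cast; ring
          rw [hcast]
          exact hadjD _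
      have hkey := key (n - 1)
      rw [show ((n - 1 + 1 : ℕ) : ZMod n) = 0 by
        rw [Nat.sub_add_cancel (by omega)]; exact ZMod.natCast_self n] at hkey
      exact hc (f 0) hkey
  · exact Nat.sInf_le h3mem
end
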